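/- arXiv:2403.04110 — 3 statements merged into one kernel-verified Lean document; each statement's English description precedes it below -/
import Mathlib

section
/- Let F be the fan graph on 10 vertices, i.e., the join K_1 ∨ P_9 consisting of one apex vertex adjacent to all 9 vertices of a path P_9. Then F is a maximal outerplanar graph, F has maximum degree 9, and the Lin–Lu–Yau curvature satisfies κ(x,y) > 0 for every edge xy of F. (In particular, the bounds Δ(G) ≤ 9 and |V(G)| ≤ 10 for positively curved maximal outerplanar graphs are sharp.) -/
open SimpleGraph

/-- `H` is a minor of `G`: there is a family of nonempty, connected, pairwise disjoint
branch sets in `G`, one for each vertex of `H`, with an edge of `G` between the branch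
sets corresponding to each edge of `H`. -/
def SimpleGraph.IsMinorOf {W : Type*} {V : Type*} (H : SimpleGraph W) (G : SimpleGraph V) :
    Prop :=
  ∃ B : W → Set V,
    (∀ w, (G.induce (B w)).Connected) ∧
    (Pairwise fun w₁ w₂ => Disjoint (B w₁) (B w₂)) ∧
    ∀ ⦃w₁ w₂⦄, H.Adj w₁ w₂ → ∃ u ∈ B w₁, ∃ v ∈ B w₂, G.Adj u v

/-- A graph is outerplanar iff it has no `K₄` minor and no `K_{2,3}` minor
(Chartrand–Harary). -/
def Outerplanar {V : Type*} (G : SimpleGraph V) : Prop :=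
  ¬ (completeGraph (Fin 4)).IsMinorOf G ∧
  ¬ (completeBipartiteGraph (Fin 2) (Fin 3)).IsMinorOf G

/-- A graph is planar iff it has no `K₅` minor and no `K_{3,3}` minor (Wagner). -/
def Planar {V : Type*} (G : SimpleGraph V) : Prop :=
  ¬ (completeGraph (Fin 5)).IsMinorOf G ∧
  ¬ (completeBipartiteGraph (Fin 3) (Fin 3)).IsMinorOf G

/-- A maximal outerplanar graph: outerplanar, and adding any edge between two distinct
non-adjacent vertices destroys outerplanarity. -/
def MaximalOuterplanar {V : Type*} (G : SimpleGraph V) : Prop :=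
  Outerplanar G ∧ ∀ x y : V, x ≠ y → ¬ G.Adj x y →
    ¬ Outerplanar (G ⊔ fromEdgeSet {s(x, y)})

/-- The (normalized) graph Laplacian `Δf(v) = (1/d_v) ∑_{u ∈ N(v)} (f u - f v)`. -/
noncomputable def graphLap {V : Type*} (G : SimpleGraph V) [Fintype V] [DecidableRel G.Adj]
    (f : V → ℤ) (v : V) : ℝ :=
  (∑ u ∈ G.neighborFinset v, ((f u : ℝ) - (f v : ℝ))) / (G.degree v)

/-- The Lin–Lu–Yau curvature of the pair `(x, y)`, via the limit-free Laplacian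
formulation: the infimum of `Δf(x) - Δf(y)` over integer-valued functions `f` that are
`1`-Lipschitz w.r.t. the graph distance and satisfy `f y - f x = 1`. -/
noncomputable def llyCurv {V : Type*} (G : SimpleGraph V) [Fintype V] [DecidableRel G.Adj]
    (x y : V) : ℝ :=
  sInf { r : ℝ | ∃ f : V → ℤ,
    (∀ u v : V, |f u - f v| ≤ (G.dist u v : ℤ)) ∧
    f y - f x = 1 ∧
    r = graphLap G f x - graphLap G f y }

/-- The fan graph `K₁ ∨ Pₙ` on `n + 1` vertices: vertex `0` is the apex, adjacent to all
of `1, …, n`, and the vertices `1, …, n` form a path. -/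
def fanGraph (n : ℕ) : SimpleGraph (Fin (n + 1)) :=
  SimpleGraph.fromRel (fun a b => a = 0 ∨ (a.val + 1 = b.val))

noncomputable instance (n : ℕ) : DecidableRel (fanGraph n).Adj := Classical.decRel _

lemma fan_adj (u v : Fin 10) : (fanGraph 9).Adj u v ↔
    (u ≠ v ∧ (u = 0 ∨ v = 0 ∨ u.val + 1 = v.val ∨ v.val + 1 = u.val)) := by
  simp only [fanGraph, fromRel_adj]; tauto
lemma fan_nf0 : (fanGraph 9).neighborFinset 0 = {1,2,3,4,5,6,7,8,9} := by
  ext u; rw [mem_neighborFinset, fan_adj]; revert u; decide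

lemma fan_deg0 : (fanGraph 9).degree 0 = 9 := by
  rw [← card_neighborFinset_eq_degree, fan_nf0]; decide

lemma lap0 (f : Fin 10 → ℤ) :
    graphLap (fanGraph 9) f 0 = (((f 1 : ℝ) + f 2 + f 3 + f 4 + f 5 + f 6 + f 7 + f 8 + f 9) - 9 * f 0) / 9 := by
  rw [graphLap, fan_nf0, fan_deg0]
  rw [show ({1,2,3,4,5,6,7,8,9} : Finset (Fin 10)) = insert 1 (insert 2 (insert 3 (insert 4 (insert 5 (insert 6 (insert 7 (insert 8 ({9})))))))) from rfl]
  rw [Finset.sum_insert (by decide), Finset.sum_insert (by decide), Finset.sum_insert (by decide), Finset.sum_insert (by decide), Finset.sum_insert (by decide), Finset.sum_insert (by decide), Finset.sum_insert (by decide), Finset.sum_insert (by decide), Finset.sum_singleton]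
  push_cast; ring

lemma fan_nf1 : (fanGraph 9).neighborFinset 1 = {0,2} := by
  ext u; rw [mem_neighborFinset, fan_adj]; revert u; decide

lemma fan_deg1 : (fanGraph 9).degree 1 = 2 := by
  rw [← card_neighborFinset_eq_degree, fan_nf1]; decide

lemma lap1 (f : Fin 10 → ℤ) :
    graphLap (fanGraph 9) f 1 = (((f 0 : ℝ) + f 2) - 2 * f 1) / 2 := by
  rw [graphLap, fan_nf1, fan_deg1]
  rw [show ({0,2} : Finset (Fin 10)) = insert 0 ({2}) from rfl]
  rw [Finset.sum_insert (by decide), Finset.sum_singleton]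
  push_cast; ring

lemma fan_nf2 : (fanGraph 9).neighborFinset 2 = {0,1,3} := by
  ext u; rw [mem_neighborFinset, fan_adj]; revert u; decide

lemma fan_deg2 : (fanGraph 9).degree 2 = 3 := by
  rw [← card_neighborFinset_eq_degree, fan_nf2]; decide

lemma lap2 (f : Fin 10 → ℤ) :
    graphLap (fanGraph 9) f 2 = (((f 0 : ℝ) + f 1 + f 3) - 3 * f 2) / 3 := by
  rw [graphLap, fan_nf2, fan_deg2]
  rw [show ({0,1,3} : Finset (Fin 10)) = insert 0 (insert 1 ({3})) from rfl]
  rw [Finset.sum_insert (by decide), Finset.sum_insert (by decide), Finset.sum_singleton]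
  push_cast; ring

lemma fan_nf3 : (fanGraph 9).neighborFinset 3 = {0,2,4} := by
  ext u; rw [mem_neighborFinset, fan_adj]; revert u; decide

lemma fan_deg3 : (fanGraph 9).degree 3 = 3 := by
  rw [← card_neighborFinset_eq_degree, fan_nf3]; decide

lemma lap3 (f : Fin 10 → ℤ) :
    graphLap (fanGraph 9) f 3 = (((f 0 : ℝ) + f 2 + f 4) - 3 * f 3) / 3 := by
  rw [graphLap, fan_nf3, fan_deg3]
  rw [show ({0,2,4} : Finset (Fin 10)) = insert 0 (insert 2 ({4})) from rfl]
  rw [Finset.sum_insert (by decide), Finset.sum_insert (by decide), Finset.sum_singleton]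
  push_cast; ring

lemma fan_nf4 : (fanGraph 9).neighborFinset 4 = {0,3,5} := by
  ext u; rw [mem_neighborFinset, fan_adj]; revert u; decide

lemma fan_deg4 : (fanGraph 9).degree 4 = 3 := by
  rw [← card_neighborFinset_eq_degree, fan_nf4]; decide

lemma lap4 (f : Fin 10 → ℤ) :
    graphLap (fanGraph 9) f 4 = (((f 0 : ℝ) + f 3 + f 5) - 3 * f 4) / 3 := by
  rw [graphLap, fan_nf4, fan_deg4]
  rw [show ({0,3,5} : Finset (Fin 10)) = insert 0 (insert 3 ({5})) from rfl]
  rw [Finset.sum_insert (by decide), Finset.sum_insert (by decide), Finset.sum_singleton]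
  push_cast; ring

lemma fan_nf5 : (fanGraph 9).neighborFinset 5 = {0,4,6} := by
  ext u; rw [mem_neighborFinset, fan_adj]; revert u; decide

lemma fan_deg5 : (fanGraph 9).degree 5 = 3 := by
  rw [← card_neighborFinset_eq_degree, fan_nf5]; decide

lemma lap5 (f : Fin 10 → ℤ) :
    graphLap (fanGraph 9) f 5 = (((f 0 : ℝ) + f 4 + f 6) - 3 * f 5) / 3 := by
  rw [graphLap, fan_nf5, fan_deg5]
  rw [show ({0,4,6} : Finset (Fin 10)) = insert 0 (insert 4 ({6})) from rfl]
  rw [Finset.sum_insert (by decide), Finset.sum_insert (by decide), Finset.sum_singleton]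
  push_cast; ring

lemma fan_nf6 : (fanGraph 9).neighborFinset 6 = {0,5,7} := by
  ext u; rw [mem_neighborFinset, fan_adj]; revert u; decide

lemma fan_deg6 : (fanGraph 9).degree 6 = 3 := by
  rw [← card_neighborFinset_eq_degree, fan_nf6]; decide

lemma lap6 (f : Fin 10 → ℤ) :
    graphLap (fanGraph 9) f 6 = (((f 0 : ℝ) + f 5 + f 7) - 3 * f 6) / 3 := by
  rw [graphLap, fan_nf6, fan_deg6]
  rw [show ({0,5,7} : Finset (Fin 10)) = insert 0 (insert 5 ({7})) from rfl]
  rw [Finset.sum_insert (by decide), Finset.sum_insert (by decide), Finset.sum_singleton]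
  push_cast; ring

lemma fan_nf7 : (fanGraph 9).neighborFinset 7 = {0,6,8} := by
  ext u; rw [mem_neighborFinset, fan_adj]; revert u; decide

lemma fan_deg7 : (fanGraph 9).degree 7 = 3 := by
  rw [← card_neighborFinset_eq_degree, fan_nf7]; decide

lemma lap7 (f : Fin 10 → ℤ) :
    graphLap (fanGraph 9) f 7 = (((f 0 : ℝ) + f 6 + f 8) - 3 * f 7) / 3 := by
  rw [graphLap, fan_nf7, fan_deg7]
  rw [show ({0,6,8} : Finset (Fin 10)) = insert 0 (insert 6 ({8})) from rfl]
  rw [Finset.sum_insert (by decide), Finset.sum_insert (by decide), Finset.sum_singleton]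
  push_cast; ring

lemma fan_nf8 : (fanGraph 9).neighborFinset 8 = {0,7,9} := by
  ext u; rw [mem_neighborFinset, fan_adj]; revert u; decide

lemma fan_deg8 : (fanGraph 9).degree 8 = 3 := by
  rw [← card_neighborFinset_eq_degree, fan_nf8]; decide

lemma lap8 (f : Fin 10 → ℤ) :
    graphLap (fanGraph 9) f 8 = (((f 0 : ℝ) + f 7 + f 9) - 3 * f 8) / 3 := by
  rw [graphLap, fan_nf8, fan_deg8]
  rw [show ({0,7,9} : Finset (Fin 10)) = insert 0 (insert 7 ({9})) from rfl]
  rw [Finset.sum_insert (by decide), Finset.sum_insert (by decide), Finset.sum_singleton]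
  push_cast; ring

lemma fan_nf9 : (fanGraph 9).neighborFinset 9 = {0,8} := by
  ext u; rw [mem_neighborFinset, fan_adj]; revert u; decide

lemma fan_deg9 : (fanGraph 9).degree 9 = 2 := by
  rw [← card_neighborFinset_eq_degree, fan_nf9]; decide

lemma lap9 (f : Fin 10 → ℤ) :
    graphLap (fanGraph 9) f 9 = (((f 0 : ℝ) + f 8) - 2 * f 9) / 2 := by
  rw [graphLap, fan_nf9, fan_deg9]
  rw [show ({0,8} : Finset (Fin 10)) = insert 0 ({8}) from rfl]
  rw [Finset.sum_insert (by decide), Finset.sum_singleton]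
  push_cast; ring
set_option maxHeartbeats 2000000 in
lemma lap_bound (f : Fin 10 → ℤ) (h : ∀ u v, (fanGraph 9).Adj u v → |f u - f v| ≤ 1) :
    ∀ x y : Fin 10, (fanGraph 9).Adj x y → f y - f x = 1 →
      (1:ℝ)/18 ≤ graphLap (fanGraph 9) f x - graphLap (fanGraph 9) f y := by
  have r01 : |(f 0:ℝ) - f 1| ≤ 1 := by exact_mod_cast h 0 1 ((fan_adj _ _).mpr (by decide))
  have r02 : |(f 0:ℝ) - f 2| ≤ 1 := by exact_mod_cast h 0 2 ((fan_adj _ _).mpr (by decide))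
  have r03 : |(f 0:ℝ) - f 3| ≤ 1 := by exact_mod_cast h 0 3 ((fan_adj _ _).mpr (by decide))
  have r04 : |(f 0:ℝ) - f 4| ≤ 1 := by exact_mod_cast h 0 4 ((fan_adj _ _).mpr (by decide))
  have r05 : |(f 0:ℝ) - f 5| ≤ 1 := by exact_mod_cast h 0 5 ((fan_adj _ _).mpr (by decide))
  have r06 : |(f 0:ℝ) - f 6| ≤ 1 := by exact_mod_cast h 0 6 ((fan_adj _ _).mpr (by decide))
  have r07 : |(f 0:ℝ) - f 7| ≤ 1 := by exact_mod_cast h 0 7 ((fan_adj _ _).mpr (by decide))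
  have r08 : |(f 0:ℝ) - f 8| ≤ 1 := by exact_mod_cast h 0 8 ((fan_adj _ _).mpr (by decide))
  have r09 : |(f 0:ℝ) - f 9| ≤ 1 := by exact_mod_cast h 0 9 ((fan_adj _ _).mpr (by decide))
  have r12 : |(f 1:ℝ) - f 2| ≤ 1 := by exact_mod_cast h 1 2 ((fan_adj _ _).mpr (by decide))
  have r23 : |(f 2:ℝ) - f 3| ≤ 1 := by exact_mod_cast h 2 3 ((fan_adj _ _).mpr (by decide))
  have r34 : |(f 3:ℝ) - f 4| ≤ 1 := by exact_mod_cast h 3 4 ((fan_adj _ _).mpr (by decide))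
  have r45 : |(f 4:ℝ) - f 5| ≤ 1 := by exact_mod_cast h 4 5 ((fan_adj _ _).mpr (by decide))
  have r56 : |(f 5:ℝ) - f 6| ≤ 1 := by exact_mod_cast h 5 6 ((fan_adj _ _).mpr (by decide))
  have r67 : |(f 6:ℝ) - f 7| ≤ 1 := by exact_mod_cast h 6 7 ((fan_adj _ _).mpr (by decide))
  have r78 : |(f 7:ℝ) - f 8| ≤ 1 := by exact_mod_cast h 7 8 ((fan_adj _ _).mpr (by decide))
  have r89 : |(f 8:ℝ) - f 9| ≤ 1 := by exact_mod_cast h 8 9 ((fan_adj _ _).mpr (by decide))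
  intro x y hadj hxy
  fin_cases x <;> fin_cases y <;>
    first
      | exact absurd ((fan_adj _ _).mp hadj) (by decide)
      | (simp only [Fin.reduceFinMk] at hxy ⊢
         simp only [lap0, lap1, lap2, lap3, lap4, lap5, lap6, lap7, lap8, lap9]
         rify at hxy
         linarith [abs_le.mp r01, abs_le.mp r02, abs_le.mp r03, abs_le.mp r04, abs_le.mp r05, abs_le.mp r06, abs_le.mp r07, abs_le.mp r08, abs_le.mp r09, abs_le.mp r12, abs_le.mp r23, abs_le.mp r34, abs_le.mp r45, abs_le.mp r56, abs_le.mp r67, abs_le.mp r78, abs_le.mp r89])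

lemma fan_reach0 (u : Fin 10) : (fanGraph 9).Reachable u 0 := by
  by_cases h : u = 0
  · rw [h]
  · exact ((fan_adj u 0).mpr ⟨h, Or.inr (Or.inl rfl)⟩).reachable

lemma fan_conn : (fanGraph 9).Connected := by
  rw [connected_iff]
  exact ⟨fun u v => (fan_reach0 u).trans (fan_reach0 v).symm, ⟨0⟩⟩

lemma curv_pos : ∀ x y : Fin 10, (fanGraph 9).Adj x y → 0 < llyCurv (fanGraph 9) x y := by
  intro x y hadj
  have hne : x ≠ y := hadj.ne
  set S := { r : ℝ | ∃ f : Fin 10 → ℤ,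
    (∀ u v : Fin 10, |f u - f v| ≤ ((fanGraph 9).dist u v : ℤ)) ∧
    f y - f x = 1 ∧
    r = graphLap (fanGraph 9) f x - graphLap (fanGraph 9) f y } with hS
  have hmem : ∃ r, r ∈ S := by
    refine ⟨_, ⟨fun v => if v = y then 1 else 0, ?_, ?_, rfl⟩⟩
    · intro u v
      by_cases hu : u = v
      · subst hu; simp
      · have h1 : |(if u = y then (1:ℤ) else 0) - (if v = y then 1 else 0)| ≤ 1 := by
          by_cases h2 : u = y <;> by_cases h3 : v = y <;> simp [h2, h3]
        refine h1.trans ?_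
        have := fan_conn.pos_dist_of_ne hu
        omega
    · simp [hne]
  refine lt_of_lt_of_le (by norm_num : (0:ℝ) < 1/18) (le_csInf ⟨_, hmem.choose_spec⟩ ?_)
  rintro b ⟨f, hL, hfy, rfl⟩
  refine lap_bound f ?_ x y hadj hfy
  intro u v huv
  refine (hL u v).trans ?_
  have hd : (fanGraph 9).dist u v ≤ 1 := by
    have := SimpleGraph.dist_le huv.toWalk
    simpa using this
  omega

-- walk in induced subgraph avoiding 0 passes through all intermediate values
lemma walk_convex {S : Set (Fin 10)} (h0 : (0:Fin 10) ∉ S) :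
    ∀ {u v : S} (_ : ((fanGraph 9).induce S).Walk u v) (c : Fin 10),
      (u:Fin 10).val ≤ c.val → c.val ≤ (v:Fin 10).val → c ∈ S := by
  intro u v p
  induction p with
  | nil =>
    intro c h1 h2
    have : c = _ := Fin.ext (le_antisymm h2 h1)
    exact this ▸ (by exact Subtype.coe_prop _)
  | @cons a b w hadj p ih =>
    intro c h1 h2
    have hab : (fanGraph 9).Adj a.1 b.1 := hadj
    rw [fan_adj] at hab
    have ha0 : a.1 ≠ 0 := fun h => h0 (h ▸ a.2)
    have hb0 : b.1 ≠ 0 := fun h => h0 (h ▸ b.2)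
    have hstep : a.1.val + 1 = b.1.val ∨ b.1.val + 1 = a.1.val := by
      rcases hab.2 with h|h|h|h
      · exact absurd h ha0
      · exact absurd h hb0
      · exact Or.inl h
      · exact Or.inr h
    by_cases hc : c.val = a.1.val
    · have : c = a.1 := Fin.ext hc
      exact this ▸ a.2
    · exact ih c (by omega) h2

lemma conn_convex {S : Set (Fin 10)} (h0 : (0:Fin 10) ∉ S)
    (hc : ((fanGraph 9).induce S).Connected) :
    ∀ u ∈ S, ∀ v ∈ S, ∀ c : Fin 10, u.val ≤ c.val → c.val ≤ v.val → c ∈ S := by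
  intro u hu v hv c h1 h2
  obtain ⟨p⟩ := hc.preconnected ⟨u, hu⟩ ⟨v, hv⟩
  exact walk_convex h0 p c h1 h2

/-- Every connected branch set avoiding the apex is an interval. -/
lemma interval_of {S : Set (Fin 10)} (h0 : (0:Fin 10) ∉ S)
    (hc : ((fanGraph 9).induce S).Connected) :
    ∃ m M : ℕ, M < 10 ∧
      (∀ s ∈ S, m ≤ (s:Fin 10).val ∧ (s:Fin 10).val ≤ M) ∧
      (∀ c : Fin 10, m ≤ c.val → c.val ≤ M → c ∈ S) := by
  have hne : S.Nonempty := by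
    obtain ⟨⟨a, ha⟩⟩ := hc.nonempty
    exact ⟨a, ha⟩
  classical
  set F := S.toFinite.toFinset with hF
  have hFne : F.Nonempty := by
    rwa [hF, Set.Finite.toFinset_nonempty]
  have hmemF : ∀ a : Fin 10, a ∈ F ↔ a ∈ S := fun a => S.toFinite.mem_toFinset
  set vals := F.image Fin.val with hv
  have hvne : vals.Nonempty := hFne.image _
  refine ⟨vals.min' hvne, vals.max' hvne, ?_, ?_, ?_⟩
  · obtain ⟨b, hb, hbv⟩ := Finset.mem_image.mp (vals.max'_mem hvne)
    exact hbv ▸ b.isLt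
  · intro s hs
    have hsv : s.val ∈ vals := Finset.mem_image_of_mem _ ((hmemF s).mpr hs)
    exact ⟨vals.min'_le _ hsv, vals.le_max' _ hsv⟩
  · intro c hc1 hc2
    obtain ⟨a, ha, hav⟩ := Finset.mem_image.mp (vals.min'_mem hvne)
    obtain ⟨b, hb, hbv⟩ := Finset.mem_image.mp (vals.max'_mem hvne)
    exact conn_convex h0 hc a ((hmemF a).mp ha) b ((hmemF b).mp hb) c
      (by omega) (by omega)

/-- Disjoint intervals are separated. -/
lemma disj_sep {S T : Set (Fin 10)} {mS MS mT MT : ℕ}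
    (hMS : MS < 10) (hMT : MT < 10)
    (hSb : ∀ s ∈ S, mS ≤ (s:Fin 10).val ∧ (s:Fin 10).val ≤ MS)
    (hSi : ∀ c : Fin 10, mS ≤ c.val → c.val ≤ MS → c ∈ S)
    (hTb : ∀ s ∈ T, mT ≤ (s:Fin 10).val ∧ (s:Fin 10).val ≤ MT)
    (hTi : ∀ c : Fin 10, mT ≤ c.val → c.val ≤ MT → c ∈ T)
    (hST : Disjoint S T) (hSne : S.Nonempty) (hTne : T.Nonempty) :
    MS < mT ∨ MT < mS := by
  by_contra h
  push_neg at h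
  obtain ⟨hs, hsS⟩ := hSne
  obtain ⟨ht, htT⟩ := hTne
  have h1 := hSb _ hsS
  have h2 := hTb _ htT
  -- intervals [mS,MS],[mT,MT] nonempty and overlapping
  set k := max mS mT with hk
  have hkS : k ≤ MS := by omega
  have hkT : k ≤ MT := by omega
  have hklt : k < 10 := by omega
  have hkv : ((⟨k, hklt⟩ : Fin 10)).val = k := rfl
  have hcS : (⟨k, hklt⟩ : Fin 10) ∈ S := hSi _ (by omega) (by omega)
  have hcT : (⟨k, hklt⟩ : Fin 10) ∈ T := hTi _ (by omega) (by omega)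
  exact Set.disjoint_left.mp hST hcS hcT

lemma sets_nonempty {S : Set (Fin 10)} (hc : ((fanGraph 9).induce S).Connected) :
    S.Nonempty := by
  obtain ⟨⟨a, ha⟩⟩ := hc.nonempty
  exact ⟨a, ha⟩

/-- step fact from an adjacency between two apex-free sets -/
lemma adj_step {S T : Set (Fin 10)} (h0S : (0:Fin 10) ∉ S) (h0T : (0:Fin 10) ∉ T)
    (h : ∃ u ∈ S, ∃ v ∈ T, (fanGraph 9).Adj u v) :
    ∃ u ∈ S, ∃ v ∈ T, u.val + 1 = v.val ∨ v.val + 1 = u.val := by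
  obtain ⟨u, hu, v, hv, huv⟩ := h
  rw [fan_adj] at huv
  refine ⟨u, hu, v, hv, ?_⟩
  rcases huv.2 with h|h|h|h
  · exact absurd h (fun h' => h0S (h' ▸ hu))
  · exact absurd h (fun h' => h0T (h' ▸ hv))
  · exact Or.inl h
  · exact Or.inr h

/-- No three pairwise-disjoint, pairwise-adjacent connected apex-free sets. -/
lemma no_three {S1 S2 S3 : Set (Fin 10)}
    (h1 : (0:Fin 10) ∉ S1) (h2 : (0:Fin 10) ∉ S2) (h3 : (0:Fin 10) ∉ S3)
    (c1 : ((fanGraph 9).induce S1).Connected) (c2 : ((fanGraph 9).induce S2).Connected)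
    (c3 : ((fanGraph 9).induce S3).Connected)
    (d12 : Disjoint S1 S2) (d13 : Disjoint S1 S3) (d23 : Disjoint S2 S3)
    (a12 : ∃ u ∈ S1, ∃ v ∈ S2, (fanGraph 9).Adj u v)
    (a13 : ∃ u ∈ S1, ∃ v ∈ S3, (fanGraph 9).Adj u v)
    (a23 : ∃ u ∈ S2, ∃ v ∈ S3, (fanGraph 9).Adj u v) : False := by
  obtain ⟨m1, M1, hM1, b1, i1⟩ := interval_of h1 c1
  obtain ⟨m2, M2, hM2, b2, i2⟩ := interval_of h2 c2
  obtain ⟨m3, M3, hM3, b3, i3⟩ := interval_of h3 c3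
  have s12 := disj_sep hM1 hM2 b1 i1 b2 i2 d12 (sets_nonempty c1) (sets_nonempty c2)
  have s13 := disj_sep hM1 hM3 b1 i1 b3 i3 d13 (sets_nonempty c1) (sets_nonempty c3)
  have s23 := disj_sep hM2 hM3 b2 i2 b3 i3 d23 (sets_nonempty c2) (sets_nonempty c3)
  obtain ⟨u12, hu12, v12, hv12, e12⟩ := adj_step h1 h2 a12
  obtain ⟨u13, hu13, v13, hv13, e13⟩ := adj_step h1 h3 a13
  obtain ⟨u23, hu23, v23, hv23, e23⟩ := adj_step h2 h3 a23
  have q1 := b1 _ hu12; have q2 := b2 _ hv12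
  have q3 := b1 _ hu13; have q4 := b3 _ hv13
  have q5 := b2 _ hu23; have q6 := b3 _ hv23
  omega

/-- No `A` adjacent to three pairwise-disjoint sets (all apex-free etc.). -/
lemma no_claw {A C1 C2 C3 : Set (Fin 10)}
    (hA : (0:Fin 10) ∉ A) (h1 : (0:Fin 10) ∉ C1) (h2 : (0:Fin 10) ∉ C2) (h3 : (0:Fin 10) ∉ C3)
    (cA : ((fanGraph 9).induce A).Connected) (c1 : ((fanGraph 9).induce C1).Connected)
    (c2 : ((fanGraph 9).induce C2).Connected) (c3 : ((fanGraph 9).induce C3).Connected)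
    (dA1 : Disjoint A C1) (dA2 : Disjoint A C2) (dA3 : Disjoint A C3)
    (d12 : Disjoint C1 C2) (d13 : Disjoint C1 C3) (d23 : Disjoint C2 C3)
    (a1 : ∃ u ∈ A, ∃ v ∈ C1, (fanGraph 9).Adj u v)
    (a2 : ∃ u ∈ A, ∃ v ∈ C2, (fanGraph 9).Adj u v)
    (a3 : ∃ u ∈ A, ∃ v ∈ C3, (fanGraph 9).Adj u v) : False := by
  obtain ⟨mA, MA, hMA, bA, iA⟩ := interval_of hA cA
  obtain ⟨m1, M1, hM1, b1, i1⟩ := interval_of h1 c1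
  obtain ⟨m2, M2, hM2, b2, i2⟩ := interval_of h2 c2
  obtain ⟨m3, M3, hM3, b3, i3⟩ := interval_of h3 c3
  have sA1 := disj_sep hMA hM1 bA iA b1 i1 dA1 (sets_nonempty cA) (sets_nonempty c1)
  have sA2 := disj_sep hMA hM2 bA iA b2 i2 dA2 (sets_nonempty cA) (sets_nonempty c2)
  have sA3 := disj_sep hMA hM3 bA iA b3 i3 dA3 (sets_nonempty cA) (sets_nonempty c3)
  have s12 := disj_sep hM1 hM2 b1 i1 b2 i2 d12 (sets_nonempty c1) (sets_nonempty c2)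
  have s13 := disj_sep hM1 hM3 b1 i1 b3 i3 d13 (sets_nonempty c1) (sets_nonempty c3)
  have s23 := disj_sep hM2 hM3 b2 i2 b3 i3 d23 (sets_nonempty c2) (sets_nonempty c3)
  obtain ⟨u1, hu1, v1, hv1, e1⟩ := adj_step hA h1 a1
  obtain ⟨u2, hu2, v2, hv2, e2⟩ := adj_step hA h2 a2
  obtain ⟨u3, hu3, v3, hv3, e3⟩ := adj_step hA h3 a3
  have q1 := bA _ hu1; have q2 := b1 _ hv1
  have q3 := bA _ hu2; have q4 := b2 _ hv2
  have q5 := bA _ hu3; have q6 := b3 _ hv3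
  omega

/-- No 4-cycle pattern `P~R, P~T, Q~R, Q~T` among disjoint apex-free sets. -/
lemma no_c4 {P Q R T : Set (Fin 10)}
    (hP : (0:Fin 10) ∉ P) (hQ : (0:Fin 10) ∉ Q) (hR : (0:Fin 10) ∉ R) (hT : (0:Fin 10) ∉ T)
    (cP : ((fanGraph 9).induce P).Connected) (cQ : ((fanGraph 9).induce Q).Connected)
    (cR : ((fanGraph 9).induce R).Connected) (cT : ((fanGraph 9).induce T).Connected)
    (dPQ : Disjoint P Q) (dRT : Disjoint R T)
    (dPR : Disjoint P R) (dPT : Disjoint P T) (dQR : Disjoint Q R) (dQT : Disjoint Q T)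
    (aPR : ∃ u ∈ P, ∃ v ∈ R, (fanGraph 9).Adj u v)
    (aPT : ∃ u ∈ P, ∃ v ∈ T, (fanGraph 9).Adj u v)
    (aQR : ∃ u ∈ Q, ∃ v ∈ R, (fanGraph 9).Adj u v)
    (aQT : ∃ u ∈ Q, ∃ v ∈ T, (fanGraph 9).Adj u v) : False := by
  obtain ⟨mP, MP, hMP, bP, iP⟩ := interval_of hP cP
  obtain ⟨mQ, MQ, hMQ, bQ, iQ⟩ := interval_of hQ cQ
  obtain ⟨mR, MR, hMR, bR, iR⟩ := interval_of hR cR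
  obtain ⟨mT, MT, hMT, bT, iT⟩ := interval_of hT cT
  have sPQ := disj_sep hMP hMQ bP iP bQ iQ dPQ (sets_nonempty cP) (sets_nonempty cQ)
  have sRT := disj_sep hMR hMT bR iR bT iT dRT (sets_nonempty cR) (sets_nonempty cT)
  have sPR := disj_sep hMP hMR bP iP bR iR dPR (sets_nonempty cP) (sets_nonempty cR)
  have sPT := disj_sep hMP hMT bP iP bT iT dPT (sets_nonempty cP) (sets_nonempty cT)
  have sQR := disj_sep hMQ hMR bQ iQ bR iR dQR (sets_nonempty cQ) (sets_nonempty cR)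
  have sQT := disj_sep hMQ hMT bQ iQ bT iT dQT (sets_nonempty cQ) (sets_nonempty cT)
  obtain ⟨u1, hu1, v1, hv1, e1⟩ := adj_step hP hR aPR
  obtain ⟨u2, hu2, v2, hv2, e2⟩ := adj_step hP hT aPT
  obtain ⟨u3, hu3, v3, hv3, e3⟩ := adj_step hQ hR aQR
  obtain ⟨u4, hu4, v4, hv4, e4⟩ := adj_step hQ hT aQT
  have q1 := bP _ hu1; have q2 := bR _ hv1
  have q3 := bP _ hu2; have q4 := bT _ hv2
  have q5 := bQ _ hu3; have q6 := bR _ hv3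
  have q7 := bQ _ hu4; have q8 := bT _ hv4
  omega

lemma fan_no_K4 : ¬ (completeGraph (Fin 4)).IsMinorOf (fanGraph 9) := by
  rintro ⟨B, hconn, hdisj, hadj⟩
  have key : ∀ i j : Fin 4, i ≠ j → (0:Fin 10) ∈ B i → (0:Fin 10) ∈ B j → False :=
    fun i j hne hi hj => Set.disjoint_left.mp (hdisj hne) hi hj
  have hsel : ∃ i j k : Fin 4, i ≠ j ∧ i ≠ k ∧ j ≠ k ∧
      (0:Fin 10) ∉ B i ∧ (0:Fin 10) ∉ B j ∧ (0:Fin 10) ∉ B k := by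
    by_cases h0 : (0:Fin 10) ∈ B 0
    · exact ⟨1, 2, 3, by decide, by decide, by decide,
        fun h => key 0 1 (by decide) h0 h, fun h => key 0 2 (by decide) h0 h,
        fun h => key 0 3 (by decide) h0 h⟩
    by_cases h1 : (0:Fin 10) ∈ B 1
    · exact ⟨0, 2, 3, by decide, by decide, by decide, h0,
        fun h => key 1 2 (by decide) h1 h, fun h => key 1 3 (by decide) h1 h⟩
    by_cases h2 : (0:Fin 10) ∈ B 2
    · exact ⟨0, 1, 3, by decide, by decide, by decide, h0, h1,
        fun h => key 2 3 (by decide) h2 h⟩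
    · exact ⟨0, 1, 2, by decide, by decide, by decide, h0, h1, h2⟩
  obtain ⟨i, j, k, hij, hik, hjk, n1, n2, n3⟩ := hsel
  exact no_three n1 n2 n3 (hconn i) (hconn j) (hconn k)
    (hdisj hij) (hdisj hik) (hdisj hjk)
    (hadj hij) (hadj hik) (hadj hjk)

lemma fan_no_K23 : ¬ (completeBipartiteGraph (Fin 2) (Fin 3)).IsMinorOf (fanGraph 9) := by
  rintro ⟨B, hconn, hdisj, hadj⟩
  set A : Fin 2 → Set (Fin 10) := fun a => B (Sum.inl a) with hA
  set C : Fin 3 → Set (Fin 10) := fun a => B (Sum.inr a) with hC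
  have hadjAC : ∀ a : Fin 2, ∀ b : Fin 3, ∃ u ∈ A a, ∃ v ∈ C b, (fanGraph 9).Adj u v :=
    fun a b => hadj (by simp)
  have hdAA : ∀ a b : Fin 2, a ≠ b → Disjoint (A a) (A b) :=
    fun a b h => hdisj (by simp [h])
  have hdCC : ∀ a b : Fin 3, a ≠ b → Disjoint (C a) (C b) :=
    fun a b h => hdisj (by simp [h])
  have hdAC : ∀ a : Fin 2, ∀ b : Fin 3, Disjoint (A a) (C b) :=
    fun a b => hdisj (by simp)
  have hcA : ∀ a, ((fanGraph 9).induce (A a)).Connected := fun a => hconn _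
  have hcC : ∀ a, ((fanGraph 9).induce (C a)).Connected := fun a => hconn _
  -- case on who contains the apex
  by_cases hA0 : (0:Fin 10) ∈ A 0
  · have n1 : (0:Fin 10) ∉ A 1 := fun h => Set.disjoint_left.mp (hdAA 0 1 (by decide)) hA0 h
    have nC : ∀ b, (0:Fin 10) ∉ C b := fun b h => Set.disjoint_left.mp (hdAC 0 b) hA0 h
    exact no_claw n1 (nC 0) (nC 1) (nC 2) (hcA 1) (hcC 0) (hcC 1) (hcC 2)
      (hdAC 1 0) (hdAC 1 1) (hdAC 1 2)
      (hdCC 0 1 (by decide)) (hdCC 0 2 (by decide)) (hdCC 1 2 (by decide))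
      (hadjAC 1 0) (hadjAC 1 1) (hadjAC 1 2)
  by_cases hA1 : (0:Fin 10) ∈ A 1
  · have nC : ∀ b, (0:Fin 10) ∉ C b := fun b h => Set.disjoint_left.mp (hdAC 1 b) hA1 h
    exact no_claw hA0 (nC 0) (nC 1) (nC 2) (hcA 0) (hcC 0) (hcC 1) (hcC 2)
      (hdAC 0 0) (hdAC 0 1) (hdAC 0 2)
      (hdCC 0 1 (by decide)) (hdCC 0 2 (by decide)) (hdCC 1 2 (by decide))
      (hadjAC 0 0) (hadjAC 0 1) (hadjAC 0 2)
  by_cases hC0 : (0:Fin 10) ∈ C 0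
  · have n1 : (0:Fin 10) ∉ C 1 := fun h => Set.disjoint_left.mp (hdCC 0 1 (by decide)) hC0 h
    have n2 : (0:Fin 10) ∉ C 2 := fun h => Set.disjoint_left.mp (hdCC 0 2 (by decide)) hC0 h
    exact no_c4 hA0 hA1 n1 n2 (hcA 0) (hcA 1) (hcC 1) (hcC 2)
      (hdAA 0 1 (by decide)) (hdCC 1 2 (by decide))
      (hdAC 0 1) (hdAC 0 2) (hdAC 1 1) (hdAC 1 2)
      (hadjAC 0 1) (hadjAC 0 2) (hadjAC 1 1) (hadjAC 1 2)
  by_cases hC1 : (0:Fin 10) ∈ C 1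
  · have n2 : (0:Fin 10) ∉ C 2 := fun h => Set.disjoint_left.mp (hdCC 1 2 (by decide)) hC1 h
    exact no_c4 hA0 hA1 hC0 n2 (hcA 0) (hcA 1) (hcC 0) (hcC 2)
      (hdAA 0 1 (by decide)) (hdCC 0 2 (by decide))
      (hdAC 0 0) (hdAC 0 2) (hdAC 1 0) (hdAC 1 2)
      (hadjAC 0 0) (hadjAC 0 2) (hadjAC 1 0) (hadjAC 1 2)
  · exact no_c4 hA0 hA1 hC0 hC1 (hcA 0) (hcA 1) (hcC 0) (hcC 1)
      (hdAA 0 1 (by decide)) (hdCC 0 1 (by decide))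
      (hdAC 0 0) (hdAC 0 1) (hdAC 1 0) (hdAC 1 1)
      (hadjAC 0 0) (hadjAC 0 1) (hadjAC 1 0) (hadjAC 1 1)

lemma fan_outerplanar : Outerplanar (fanGraph 9) := ⟨fan_no_K4, fan_no_K23⟩

lemma conn_singleton {V : Type*} (G : SimpleGraph V) (a : V) :
    (G.induce {a}).Connected := by
  rw [connected_iff]
  refine ⟨fun u v => ?_, ⟨⟨a, rfl⟩⟩⟩
  have : u = v := Subtype.ext (u.2.trans v.2.symm)
  rw [this]

lemma conn_triple {V : Type*} (G : SimpleGraph V) (a b c : V)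
    (hab : G.Adj a b) (hbc : G.Adj b c) :
    (G.induce {a, b, c}).Connected := by
  rw [connected_iff]
  have hb : b ∈ ({a, b, c} : Set V) := by simp
  have reach : ∀ z (hz : z ∈ ({a, b, c} : Set V)),
      (G.induce {a, b, c}).Reachable ⟨z, hz⟩ ⟨b, hb⟩ := by
    intro z hz
    rcases hz with h | h | h
    · subst h; exact SimpleGraph.Adj.reachable (by exact hab)
    · subst h; rfl
    · subst h; exact SimpleGraph.Adj.reachable (by exact hbc.symm)
  refine ⟨fun u v => ?_, ⟨⟨b, hb⟩⟩⟩
  obtain ⟨z, hz⟩ := u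
  obtain ⟨w, hw⟩ := v
  exact (reach z hz).trans (reach w hw).symm

lemma fan_adj' (u v : Fin 10) (hne : u.val ≠ v.val)
    (h : u.val = 0 ∨ v.val = 0 ∨ u.val + 1 = v.val ∨ v.val + 1 = u.val) :
    (fanGraph 9).Adj u v := by
  rw [fan_adj]
  refine ⟨fun h' => hne (by rw [h']), ?_⟩
  rcases h with h|h|h|h
  · exact Or.inl (Fin.ext h)
  · exact Or.inr (Or.inl (Fin.ext h))
  · exact Or.inr (Or.inr (Or.inl h))
  · exact Or.inr (Or.inr (Or.inr h))

lemma chord_K23 (c o : Fin 10) (h1 : 2 ≤ c.val) (h2 : c.val ≤ 8)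
    (ho1 : 1 ≤ o.val) (ho9 : o.val ≤ 9)
    (hdist : c.val + 2 ≤ o.val ∨ o.val + 2 ≤ c.val) :
    (completeBipartiteGraph (Fin 2) (Fin 3)).IsMinorOf
      (fanGraph 9 ⊔ fromEdgeSet {s(c, o)}) := by
  set G' := fanGraph 9 ⊔ fromEdgeSet {s(c, o)} with hG'
  set z : Fin 10 := ⟨0, by omega⟩ with hz
  have hzv : z.val = 0 := rfl
  set cm : Fin 10 := ⟨c.val - 1, by omega⟩ with hcm
  set cp : Fin 10 := ⟨c.val + 1, by omega⟩ with hcp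
  have hcmv : cm.val = c.val - 1 := rfl
  have hcpv : cp.val = c.val + 1 := rfl
  have h0v : (0 : Fin 10).val = 0 := rfl
  have hfan : ∀ u v : Fin 10, (fanGraph 9).Adj u v → G'.Adj u v :=
    fun u v h => (sup_adj _ _ _ _).mpr (Or.inl h)
  have hnew : G'.Adj c o :=
    (sup_adj _ _ _ _).mpr (Or.inr ((fromEdgeSet_adj _).mpr ⟨rfl, Fin.ne_of_val_ne (by omega)⟩))
  refine ⟨Sum.elim ![{z}, {c}] ![{cm}, {cp}, {o}], ?_, ?_, ?_⟩
  · rintro (a|a) <;> fin_cases a <;>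
      simp only [Fin.reduceFinMk, Sum.elim_inl, Sum.elim_inr, Matrix.cons_val_zero, Matrix.cons_val_one,
        Matrix.head_cons, Matrix.cons_val_two, Matrix.tail_cons] <;>
      exact conn_singleton _ _
  · rintro (a|a) (b|b) hne <;> fin_cases a <;> fin_cases b <;>
      simp only [Fin.reduceFinMk, Sum.elim_inl, Sum.elim_inr, Matrix.cons_val_zero, Matrix.cons_val_one,
        Matrix.head_cons, Matrix.cons_val_two, Matrix.tail_cons] <;>
      first
        | exact absurd rfl hne
        | (rw [Set.disjoint_singleton]; exact Fin.ne_of_val_ne (by omega))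
  · rintro (a|a) (b|b) hadj
    · exact absurd hadj (by simp)
    · clear hadj; fin_cases a <;> fin_cases b <;>
        simp only [Fin.reduceFinMk, Sum.elim_inl, Sum.elim_inr, Matrix.cons_val_zero,
          Matrix.cons_val_one, Matrix.head_cons, Matrix.cons_val_two, Matrix.tail_cons] <;>
        first
          | exact ⟨_, rfl, _, rfl, hfan _ _ (fan_adj' _ _ (by omega) (by omega))⟩
          | exact ⟨_, rfl, _, rfl, hnew⟩
          | exact ⟨_, rfl, _, rfl, hnew.symm⟩
    · clear hadj; fin_cases a <;> fin_cases b <;>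
        simp only [Fin.reduceFinMk, Sum.elim_inl, Sum.elim_inr, Matrix.cons_val_zero,
          Matrix.cons_val_one, Matrix.head_cons, Matrix.cons_val_two, Matrix.tail_cons] <;>
        first
          | exact ⟨_, rfl, _, rfl, hfan _ _ (fan_adj' _ _ (by omega) (by omega))⟩
          | exact ⟨_, rfl, _, rfl, hnew⟩
          | exact ⟨_, rfl, _, rfl, hnew.symm⟩
    · exact absurd hadj (by simp)

lemma chord_K4_19 (x y : Fin 10) (hx : x.val = 1) (hy : y.val = 9) :
    (completeGraph (Fin 4)).IsMinorOf (fanGraph 9 ⊔ fromEdgeSet {s(x, y)}) := by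
  set G' := fanGraph 9 ⊔ fromEdgeSet {s(x, y)} with hG'
  have hfan : ∀ u v : Fin 10, (fanGraph 9).Adj u v → G'.Adj u v :=
    fun u v h => (sup_adj _ _ _ _).mpr (Or.inl h)
  set p0 : Fin 10 := ⟨0, by omega⟩
  set p1 : Fin 10 := ⟨1, by omega⟩
  set p2 : Fin 10 := ⟨2, by omega⟩
  set p3 : Fin 10 := ⟨3, by omega⟩
  set p4 : Fin 10 := ⟨4, by omega⟩
  set p5 : Fin 10 := ⟨5, by omega⟩
  set p6 : Fin 10 := ⟨6, by omega⟩
  set p7 : Fin 10 := ⟨7, by omega⟩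
  set p8 : Fin 10 := ⟨8, by omega⟩
  set p9 : Fin 10 := ⟨9, by omega⟩
  have hp0v : p0.val = 0 := rfl
  have hp1v : p1.val = 1 := rfl
  have hp2v : p2.val = 2 := rfl
  have hp3v : p3.val = 3 := rfl
  have hp4v : p4.val = 4 := rfl
  have hp5v : p5.val = 5 := rfl
  have hp6v : p6.val = 6 := rfl
  have hp7v : p7.val = 7 := rfl
  have hp8v : p8.val = 8 := rfl
  have hp9v : p9.val = 9 := rfl
  have hxp : x = p1 := Fin.ext (by omega)
  have hyp : y = p9 := Fin.ext (by omega)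
  have hnew : G'.Adj p1 p9 := by
    rw [← hxp, ← hyp]
    exact (sup_adj _ _ _ _).mpr (Or.inr ((fromEdgeSet_adj _).mpr
      ⟨rfl, fun h => by rw [hxp, hyp] at h; exact absurd (congrArg Fin.val h) (by omega)⟩))
  have fa : ∀ (a b : ℕ) (ha : a < 10) (hb : b < 10), a ≠ b → (a = 0 ∨ b = 0 ∨ a + 1 = b ∨ b + 1 = a) →
      G'.Adj ⟨a, ha⟩ ⟨b, hb⟩ := by
    intro a b ha hb hne h
    have e1 : (⟨a, ha⟩ : Fin 10).val = a := rfl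
    have e2 : (⟨b, hb⟩ : Fin 10).val = b := rfl
    exact hfan _ _ (fan_adj' _ _ (by omega) (by omega))
  refine ⟨![{p0}, {p1, p2, p3}, {p4, p5, p6}, {p7, p8, p9}], ?_, ?_, ?_⟩
  · intro w
    fin_cases w <;>
      simp only [Fin.reduceFinMk, Matrix.cons_val_zero, Matrix.cons_val_one, Matrix.head_cons,
        Matrix.cons_val_two, Matrix.tail_cons, Matrix.cons_val_three]
    · exact conn_singleton _ _
    · exact conn_triple _ _ _ _ (fa 1 2 (by omega) (by omega) (by omega) (by omega))
        (fa 2 3 (by omega) (by omega) (by omega) (by omega))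
    · exact conn_triple _ _ _ _ (fa 4 5 (by omega) (by omega) (by omega) (by omega))
        (fa 5 6 (by omega) (by omega) (by omega) (by omega))
    · exact conn_triple _ _ _ _ (fa 7 8 (by omega) (by omega) (by omega) (by omega))
        (fa 8 9 (by omega) (by omega) (by omega) (by omega))
  · intro w1 w2 hne
    fin_cases w1 <;> fin_cases w2 <;>
      simp only [Fin.reduceFinMk, Matrix.cons_val_zero, Matrix.cons_val_one, Matrix.head_cons,
        Matrix.cons_val_two, Matrix.tail_cons, Matrix.cons_val_three]
    · exact absurd rfl hne
    · (rw [Set.disjoint_left]; intro a ha hb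
       simp only [Set.mem_insert_iff, Set.mem_singleton_iff] at ha hb
       subst ha
       rcases hb with h|h|h <;> exact absurd (congrArg Fin.val h) (by omega))
    · (rw [Set.disjoint_left]; intro a ha hb
       simp only [Set.mem_insert_iff, Set.mem_singleton_iff] at ha hb
       subst ha
       rcases hb with h|h|h <;> exact absurd (congrArg Fin.val h) (by omega))
    · (rw [Set.disjoint_left]; intro a ha hb
       simp only [Set.mem_insert_iff, Set.mem_singleton_iff] at ha hb
       subst ha
       rcases hb with h|h|h <;> exact absurd (congrArg Fin.val h) (by omega))
    · (rw [Set.disjoint_left]; intro a ha hb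
       simp only [Set.mem_insert_iff, Set.mem_singleton_iff] at ha hb
       subst hb
       rcases ha with h|h|h <;> exact absurd (congrArg Fin.val h) (by omega))
    · exact absurd rfl hne
    · (rw [Set.disjoint_left]; intro a ha hb
       simp only [Set.mem_insert_iff, Set.mem_singleton_iff] at ha hb
       rcases ha with rfl|rfl|rfl <;> rcases hb with h|h|h <;>
         exact absurd (congrArg Fin.val h) (by omega))
    · (rw [Set.disjoint_left]; intro a ha hb
       simp only [Set.mem_insert_iff, Set.mem_singleton_iff] at ha hb
       rcases ha with rfl|rfl|rfl <;> rcases hb with h|h|h <;>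
         exact absurd (congrArg Fin.val h) (by omega))
    · (rw [Set.disjoint_left]; intro a ha hb
       simp only [Set.mem_insert_iff, Set.mem_singleton_iff] at ha hb
       subst hb
       rcases ha with h|h|h <;> exact absurd (congrArg Fin.val h) (by omega))
    · (rw [Set.disjoint_left]; intro a ha hb
       simp only [Set.mem_insert_iff, Set.mem_singleton_iff] at ha hb
       rcases ha with rfl|rfl|rfl <;> rcases hb with h|h|h <;>
         exact absurd (congrArg Fin.val h) (by omega))
    · exact absurd rfl hne
    · (rw [Set.disjoint_left]; intro a ha hb
       simp only [Set.mem_insert_iff, Set.mem_singleton_iff] at ha hb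
       rcases ha with rfl|rfl|rfl <;> rcases hb with h|h|h <;>
         exact absurd (congrArg Fin.val h) (by omega))
    · (rw [Set.disjoint_left]; intro a ha hb
       simp only [Set.mem_insert_iff, Set.mem_singleton_iff] at ha hb
       subst hb
       rcases ha with h|h|h <;> exact absurd (congrArg Fin.val h) (by omega))
    · (rw [Set.disjoint_left]; intro a ha hb
       simp only [Set.mem_insert_iff, Set.mem_singleton_iff] at ha hb
       rcases ha with rfl|rfl|rfl <;> rcases hb with h|h|h <;>
         exact absurd (congrArg Fin.val h) (by omega))
    · (rw [Set.disjoint_left]; intro a ha hb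
       simp only [Set.mem_insert_iff, Set.mem_singleton_iff] at ha hb
       rcases ha with rfl|rfl|rfl <;> rcases hb with h|h|h <;>
         exact absurd (congrArg Fin.val h) (by omega))
    · exact absurd rfl hne
  · intro w1 w2 hadj
    fin_cases w1 <;> fin_cases w2 <;>
      simp only [Fin.reduceFinMk, Matrix.cons_val_zero, Matrix.cons_val_one, Matrix.head_cons,
        Matrix.cons_val_two, Matrix.tail_cons, Matrix.cons_val_three]
    · exact absurd hadj (by simp)
    · exact ⟨p0, rfl, p1, by simp, fa 0 1 (by omega) (by omega) (by omega) (by omega)⟩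
    · exact ⟨p0, rfl, p4, by simp, fa 0 4 (by omega) (by omega) (by omega) (by omega)⟩
    · exact ⟨p0, rfl, p7, by simp, fa 0 7 (by omega) (by omega) (by omega) (by omega)⟩
    · exact ⟨p1, by simp, p0, rfl, fa 1 0 (by omega) (by omega) (by omega) (by omega)⟩
    · exact absurd hadj (by simp)
    · exact ⟨p3, by simp, p4, by simp, fa 3 4 (by omega) (by omega) (by omega) (by omega)⟩
    · exact ⟨p1, by simp, p9, by simp, hnew⟩
    · exact ⟨p4, by simp, p0, rfl, fa 4 0 (by omega) (by omega) (by omega) (by omega)⟩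
    · exact ⟨p4, by simp, p3, by simp, fa 4 3 (by omega) (by omega) (by omega) (by omega)⟩
    · exact absurd hadj (by simp)
    · exact ⟨p6, by simp, p7, by simp, fa 6 7 (by omega) (by omega) (by omega) (by omega)⟩
    · exact ⟨p7, by simp, p0, rfl, fa 7 0 (by omega) (by omega) (by omega) (by omega)⟩
    · exact ⟨p9, by simp, p1, by simp, hnew.symm⟩
    · exact ⟨p7, by simp, p6, by simp, fa 7 6 (by omega) (by omega) (by omega) (by omega)⟩
    · exact absurd hadj (by simp)

lemma fan_maximal : ∀ x y : Fin 10, x ≠ y → ¬ (fanGraph 9).Adj x y →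
    ¬ Outerplanar (fanGraph 9 ⊔ fromEdgeSet {s(x, y)}) := by
  intro x y hne hnadj hop
  have hvne : x.val ≠ y.val := fun h => hne (Fin.ext h)
  have h1x : 1 ≤ x.val := by
    rcases Nat.eq_zero_or_pos x.val with h | h
    · exact absurd (fan_adj' x y hvne (Or.inl h)) hnadj
    · omega
  have h1y : 1 ≤ y.val := by
    rcases Nat.eq_zero_or_pos y.val with h | h
    · exact absurd (fan_adj' x y hvne (Or.inr (Or.inl h))) hnadj
    · omega
  have hg1 : x.val + 1 ≠ y.val := fun h =>
    hnadj (fan_adj' x y hvne (Or.inr (Or.inr (Or.inl h))))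
  have hg2 : y.val + 1 ≠ x.val := fun h =>
    hnadj (fan_adj' x y hvne (Or.inr (Or.inr (Or.inr h))))
  have hx9 : x.val ≤ 9 := by omega
  have hy9 : y.val ≤ 9 := by omega
  by_cases hx : 2 ≤ x.val ∧ x.val ≤ 8
  · exact hop.2 (chord_K23 x y hx.1 hx.2 (by omega) (by omega) (by omega))
  · by_cases hy : 2 ≤ y.val ∧ y.val ≤ 8
    · refine hop.2 ?_
      rw [show s(x, y) = s(y, x) from Sym2.eq_swap]
      exact chord_K23 y x hy.1 hy.2 (by omega) (by omega) (by omega)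
    · have hcase : (x.val = 1 ∧ y.val = 9) ∨ (x.val = 9 ∧ y.val = 1) := by omega
      rcases hcase with ⟨hx1, hy1⟩ | ⟨hx1, hy1⟩
      · exact hop.1 (chord_K4_19 x y hx1 hy1)
      · refine hop.1 ?_
        rw [show s(x, y) = s(y, x) from Sym2.eq_swap]
        exact chord_K4_19 y x hy1 hx1

lemma fan_maxOP : MaximalOuterplanar (fanGraph 9) := ⟨fan_outerplanar, fan_maximal⟩

lemma fan_nfdeg0 : (fanGraph 9).degree 0 = 9 := by
  have : (fanGraph 9).neighborFinset 0 = {1,2,3,4,5,6,7,8,9} := by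
    ext u; rw [mem_neighborFinset, fan_adj]; revert u; decide
  rw [← card_neighborFinset_eq_degree, this]; decide

lemma fan_maxDegree : (fanGraph 9).maxDegree = 9 := by
  refine le_antisymm ?_ ?_
  · refine (fanGraph 9).maxDegree_le_of_forall_degree_le 9 fun v => ?_
    have := (fanGraph 9).degree_lt_card_verts v
    simp only [Fintype.card_fin] at this
    omega
  · have h := (fanGraph 9).degree_le_maxDegree 0
    rwa [fan_nfdeg0] at h

/-- the fan graph `K₁ ∨ P₉` on `10` vertices is maximal outerplanar, has
maximum degree `9`, and has positive Lin–Lu–Yau curvature on every edge. -/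
theorem fanGraph_ten_sharp :
    MaximalOuterplanar (fanGraph 9) ∧
    (fanGraph 9).maxDegree = 9 ∧
    (∀ x y : Fin 10, (fanGraph 9).Adj x y → 0 < llyCurv (fanGraph 9) x y) := by
  exact ⟨fan_maxOP, fan_maxDegree, curv_pos⟩
end

section
/- Let G be a finite simple planar graph such that the Lin–Lu–Yau curvature satisfies κ(x,y) > 0 for every edge xy of G. Let xy ∈ E(G) with d_x ≤ d_y, and set S := N(x) \ {y}. Then |N(S) ∩ N(y)| > (1 − 1/d_x)·d_y − (2|N(x,y)| + 1) + |N(S) ∩ N(x,y)|. -/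
open SimpleGraph

/-!
Test the curvature of `xy` against `f = min 2 (dist · B)` with `B = {x} ∪ (N(x) \ {y})`:
`f` is 1-Lipschitz with `f y - f x = 1`, so `κ(x,y) > 0` gives `Δf(x) > Δf(y)`. Here
`Δf(x) = 1/d_x`, while `d_y Δf(y) = d_y - |N(y) ∩ B| - |N(y) ∩ (B ∪ N(B))|`; for `d_x ≥ 2` these
sets are `{x} ∪ N(x,y)` and `(N(S) ∩ N(y)) ∪ N(x,y)`, and inclusion–exclusion turns
`Δf(x) > Δf(y)` into exactly the claimed bound. Positive curvature on an edge also forces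
the graph to be connected, since otherwise no admissible `f` exists.
-/

open Finset

namespace SimpleGraph

variable {V : Type*} (G : SimpleGraph V)

theorem abs_sub_le_length_of_forall_adj {f : V → ℤ}
    (hf : ∀ u v, G.Adj u v → |f u - f v| ≤ 1) : ∀ {u v : V} (p : G.Walk u v), |f u - f v| ≤ p.length
  | _, _, .nil => by simp
  | u, w, .cons (v := v) huv p => by
    have h₁ := abs_sub_le (f u) (f v) (f w)
    have h₂ := hf u v huv
    have h₃ := abs_sub_le_length_of_forall_adj hf p
    rw [Walk.length_cons]
    push_cast
    linarith

theorem abs_sub_le_dist_of_forall_adj (hG : G.Preconnected) {f : V → ℤ}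
    (hf : ∀ u v, G.Adj u v → |f u - f v| ≤ 1) (u v : V) : |f u - f v| ≤ G.dist u v := by
  obtain ⟨p, hp⟩ := (hG u v).exists_walk_length_eq_dist
  exact hp ▸ G.abs_sub_le_length_of_forall_adj hf p

open Classical in
/-- `min 2 (dist v B)`. -/
noncomputable def truncDist (B : Set V) (v : V) : ℤ :=
  if v ∈ B then 0 else if ∃ b ∈ B, G.Adj b v then 1 else 2

variable {G}

theorem truncDist_of_mem {B : Set V} {v : V} (hv : v ∈ B) : G.truncDist B v = 0 := by
  simp [truncDist, hv]

theorem truncDist_of_adj {B : Set V} {b v : V} (hv : v ∉ B) (hb : b ∈ B) (hbv : G.Adj b v) :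
    G.truncDist B v = 1 := by
  simp only [truncDist, hv, if_false]
  rw [if_pos ⟨b, hb, hbv⟩]

theorem abs_truncDist_sub_le_one (B : Set V) {u v : V} (huv : G.Adj u v) :
    |G.truncDist B u - G.truncDist B v| ≤ 1 := by
  unfold truncDist
  split_ifs <;> norm_num
  · rename_i hu _ hv
    exact hv ⟨u, hu, huv⟩
  · rename_i _ hu hv
    exact hu ⟨v, hv, huv.symm⟩

theorem sum_truncDist (B : Set V) (s : Finset V) :
    ∑ u ∈ s, (G.truncDist B u : ℝ) =
      2 * #s - ((s : Set V) ∩ B).ncard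
        - ((s : Set V) ∩ (B ∪ {v | ∃ b ∈ B, G.Adj b v})).ncard := by
  classical
  have hpoint : ∀ u, (G.truncDist B u : ℝ) =
      2 - (if u ∈ B then 1 else 0)
        - (if u ∈ B ∪ {v | ∃ b ∈ B, G.Adj b v} then 1 else 0) := by
    intro u
    unfold truncDist
    split_ifs <;> grind
  have hcard (C : Set V) [DecidablePred (· ∈ C)] :
      ((s : Set V) ∩ C).ncard = #{u ∈ s | u ∈ C} := by
    rw [← Set.ncard_coe_finset, coe_filter]
    rfl
  simp only [hpoint, sum_sub_distrib, sum_const, sum_boole, hcard, nsmul_eq_mul]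
  ring

end SimpleGraph

section Curvature

variable {V : Type*} [Fintype V] (G : SimpleGraph V) [DecidableRel G.Adj]

theorem graphLap_eq_sum_div_degree_sub (f : V → ℤ) {v : V} (hv : G.degree v ≠ 0) :
    graphLap G f v = (∑ u ∈ G.neighborFinset v, (f u : ℝ)) / G.degree v - f v := by
  rw [graphLap, sum_sub_distrib, sum_const, card_neighborFinset_eq_degree, nsmul_eq_mul, sub_div,
    mul_div_cancel_left₀ _ (by exact_mod_cast hv)]

theorem abs_graphLap_le_one {f : V → ℤ} (hf : ∀ u v, G.Adj u v → |f u - f v| ≤ 1) (v : V) :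
    |graphLap G f v| ≤ 1 := by
  rw [graphLap, abs_div, Nat.abs_cast]
  rcases (G.degree v).eq_zero_or_pos with h | h
  · simp [h]
  rw [div_le_one (by positivity)]
  calc |∑ u ∈ G.neighborFinset v, ((f u : ℝ) - f v)|
      ≤ ∑ u ∈ G.neighborFinset v, |(f u : ℝ) - f v| := abs_sum_le_sum_abs _ _
    _ ≤ ∑ _u ∈ G.neighborFinset v, 1 := sum_le_sum fun u hu => by
        rw [abs_sub_comm]
        exact_mod_cast hf v u ((G.mem_neighborFinset v u).1 hu)
    _ = G.degree v := by simp

theorem llyCurv_le_graphLap_sub {f : V → ℤ} (hf : ∀ u v, |f u - f v| ≤ G.dist u v) {x y : V}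
    (hfxy : f y - f x = 1) : llyCurv G x y ≤ graphLap G f x - graphLap G f y := by
  refine csInf_le ⟨-2, ?_⟩ ⟨f, hf, hfxy, rfl⟩
  rintro _ ⟨g, hg, -, rfl⟩
  have hadj : ∀ u v, G.Adj u v → |g u - g v| ≤ 1 := fun u v huv => by
    simpa [dist_eq_one_iff_adj.2 huv] using hg u v
  have hx := abs_le.1 (abs_graphLap_le_one G hadj x)
  have hy := abs_le.1 (abs_graphLap_le_one G hadj y)
  linarith [hx.1, hy.2]

theorem preconnected_of_llyCurv_pos {x y : V} (hxy : G.Adj x y) (h : 0 < llyCurv G x y) :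
    G.Preconnected := by
  by_contra hG
  obtain ⟨w, hw⟩ : ∃ w, ¬ G.Reachable x w := by
    by_contra! hx
    exact hG fun u v => (hx u).symm.trans (hx v)
  refine h.ne' ?_
  rw [llyCurv]
  convert Real.sInf_empty using 2
  refine Set.eq_empty_of_forall_notMem ?_
  rintro _ ⟨f, hf, hfxy, -⟩
  have hwx := hf w x
  have hwy := hf w y
  rw [dist_eq_zero_of_not_reachable fun h => hw h.symm] at hwx
  rw [dist_eq_zero_of_not_reachable fun h => hw (hxy.reachable.trans h.symm)] at hwy
  simp only [Nat.cast_zero, abs_nonpos_iff, sub_eq_zero] at hwx hwy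
  omega

end Curvature

section TestFunction

variable {V : Type*} {G : SimpleGraph V} {x y : V}

theorem neighborSet_inter_insert_neighborSet_sdiff (hxy : G.Adj x y) :
    G.neighborSet y ∩ insert x (G.neighborSet x \ {y}) =
      insert x (G.neighborSet x ∩ G.neighborSet y) := by
  ext v
  simp only [Set.mem_inter_iff, Set.mem_insert_iff, Set.mem_sdiff, mem_neighborSet,
    Set.mem_singleton_iff]
  constructor
  · rintro ⟨hyv, rfl | ⟨hxv, -⟩⟩
    · exact Or.inl rfl
    · exact Or.inr ⟨hxv, hyv⟩
  · rintro (rfl | ⟨hxv, hyv⟩)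
    · exact ⟨hxy.symm, Or.inl rfl⟩
    · exact ⟨hyv, Or.inr ⟨hxv, hyv.ne'⟩⟩

theorem neighborSet_inter_insert_union_adj {S : Set V} (hS : S ⊆ G.neighborSet x)
    (hSne : S.Nonempty) :
    G.neighborSet y ∩ (insert x S ∪ {v | ∃ b ∈ insert x S, G.Adj b v}) =
      {v | ∃ s ∈ S, G.Adj v s} ∩ G.neighborSet y ∪ G.neighborSet x ∩ G.neighborSet y := by
  obtain ⟨s₀, hs₀⟩ := hSne
  ext v
  simp only [Set.mem_inter_iff, Set.mem_union, Set.mem_insert_iff, Set.mem_ofPred_eq,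
    mem_neighborSet, exists_eq_or_imp]
  constructor
  · rintro ⟨hyv, (rfl | hv) | hxv | ⟨b, hb, hbv⟩⟩
    · exact Or.inl ⟨⟨s₀, hs₀, hS hs₀⟩, hyv⟩
    · exact Or.inr ⟨hS hv, hyv⟩
    · exact Or.inr ⟨hxv, hyv⟩
    · exact Or.inl ⟨⟨b, hb, hbv.symm⟩, hyv⟩
  · rintro (⟨⟨b, hb, hvb⟩, hyv⟩ | ⟨hxv, hyv⟩)
    · exact ⟨hyv, Or.inr (Or.inr ⟨b, hb, hvb.symm⟩)⟩
    · exact ⟨hyv, Or.inr (Or.inl hxv)⟩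

theorem truncDist_insert_neighborSet_sdiff_right (hxy : G.Adj x y) :
    G.truncDist (insert x (G.neighborSet x \ {y})) y = 1 :=
  truncDist_of_adj (by simp [hxy.ne']) (Set.mem_insert x _) hxy

variable [Fintype V] [DecidableRel G.Adj]

theorem graphLap_truncDist_left (hxy : G.Adj x y) :
    graphLap G (G.truncDist (insert x (G.neighborSet x \ {y}))) x = 1 / G.degree x := by
  have hx : G.degree x ≠ 0 := (G.degree_pos_iff_exists_adj x).2 ⟨y, hxy⟩ |>.ne'
  rw [graphLap_eq_sum_div_degree_sub G _ hx, truncDist_of_mem (Set.mem_insert x _),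
    sum_eq_single_of_mem y ((G.mem_neighborFinset x y).2 hxy),
    truncDist_insert_neighborSet_sdiff_right hxy]
  · simp
  · intro u hu huy
    have hu' : u ∈ G.neighborSet x \ {y} := ⟨(G.mem_neighborFinset x u).1 hu, huy⟩
    rw [truncDist_of_mem (Set.mem_insert_of_mem x hu')]
    simp

theorem graphLap_truncDist_right (hxy : G.Adj x y) (hx : 2 ≤ G.degree x) :
    graphLap G (G.truncDist (insert x (G.neighborSet x \ {y}))) y =
      1 - (2 * (G.neighborSet x ∩ G.neighborSet y).ncard + 1
        + ({v | ∃ s ∈ G.neighborSet x \ {y}, G.Adj v s} ∩ G.neighborSet y).ncard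
        - ({v | ∃ s ∈ G.neighborSet x \ {y}, G.Adj v s}
            ∩ (G.neighborSet x ∩ G.neighborSet y)).ncard) / G.degree y := by
  have hy : G.degree y ≠ 0 := (G.degree_pos_iff_exists_adj y).2 ⟨x, hxy.symm⟩ |>.ne'
  have hS : (G.neighborSet x \ {y}).Nonempty := by
    obtain ⟨s, hs, hsy⟩ := exists_mem_ne (s := G.neighborFinset x)
      (by rw [card_neighborFinset_eq_degree]; omega) y
    exact ⟨s, (G.mem_neighborFinset x s).1 hs, hsy⟩
  have hinter : {v | ∃ s ∈ G.neighborSet x \ {y}, G.Adj v s} ∩ G.neighborSet y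
      ∩ (G.neighborSet x ∩ G.neighborSet y) =
      {v | ∃ s ∈ G.neighborSet x \ {y}, G.Adj v s} ∩ (G.neighborSet x ∩ G.neighborSet y) := by
    rw [Set.inter_assoc, Set.inter_eq_right.2 Set.inter_subset_right]
  have hunion := Set.ncard_union_add_ncard_inter
    ({v | ∃ s ∈ G.neighborSet x \ {y}, G.Adj v s} ∩ G.neighborSet y)
    (G.neighborSet x ∩ G.neighborSet y)
  rw [hinter, ← Nat.cast_inj (R := ℝ)] at hunion
  push_cast at hunion
  rw [graphLap_eq_sum_div_degree_sub G _ hy, sum_truncDist, coe_neighborFinset,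
    card_neighborFinset_eq_degree, neighborSet_inter_insert_neighborSet_sdiff hxy,
    neighborSet_inter_insert_union_adj Set.sdiff_subset hS,
    Set.ncard_insert_of_notMem (by simp), truncDist_insert_neighborSet_sdiff_right hxy]
  field_simp
  push_cast
  linarith [hunion]

end TestFunction

theorem genbound_of_planar_general {V : Type*} [Fintype V]
    (G : SimpleGraph V) [DecidableRel G.Adj]
    (hpos : ∀ u v : V, G.Adj u v → 0 < llyCurv G u v)
    (x y : V) (hxy : G.Adj x y) :
    (({v : V | ∃ s ∈ G.neighborSet x \ {y}, G.Adj v s} ∩ G.neighborSet y).ncard : ℝ) >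
      (1 - 1 / (G.degree x : ℝ)) * (G.degree y : ℝ)
        - (2 * ((G.neighborSet x ∩ G.neighborSet y).ncard : ℝ) + 1)
        + (({v : V | ∃ s ∈ G.neighborSet x \ {y}, G.Adj v s}
            ∩ (G.neighborSet x ∩ G.neighborSet y)).ncard : ℝ) := by
  obtain hx | hx : G.degree x = 1 ∨ 2 ≤ G.degree x := by
    have := (G.degree_pos_iff_exists_adj x).2 ⟨y, hxy⟩
    omega
  · have hle : ({v : V | ∃ s ∈ G.neighborSet x \ {y}, G.Adj v s}
        ∩ (G.neighborSet x ∩ G.neighborSet y)).ncard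
        ≤ ({v : V | ∃ s ∈ G.neighborSet x \ {y}, G.Adj v s} ∩ G.neighborSet y).ncard :=
      Set.ncard_le_ncard (Set.inter_subset_inter_right _ Set.inter_subset_right)
    rw [hx, Nat.cast_one, div_one, sub_self, zero_mul]
    have := (Nat.cast_le (α := ℝ)).2 hle
    linarith [(G.neighborSet x ∩ G.neighborSet y).ncard.cast_nonneg (α := ℝ)]
  · have hlip := G.abs_sub_le_dist_of_forall_adj
      (preconnected_of_llyCurv_pos G hxy (hpos x y hxy))
      fun _ _ h => abs_truncDist_sub_le_one (insert x (G.neighborSet x \ {y})) h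
    have hκ := (hpos x y hxy).trans_le <| llyCurv_le_graphLap_sub G hlip <| by
      rw [truncDist_insert_neighborSet_sdiff_right hxy, truncDist_of_mem (Set.mem_insert x _)]
      rfl
    rw [graphLap_truncDist_left hxy, graphLap_truncDist_right hxy hx] at hκ
    have hy : (0 : ℝ) < G.degree y := by
      exact_mod_cast (G.degree_pos_iff_exists_adj y).2 ⟨x, hxy.symm⟩
    rw [gt_iff_lt, ← sub_pos]
    field_simp at hκ ⊢
    linarith

/-- Lu–Wang's bound for positively curved planar graphs:
`|N(S) ∩ N(y)| > (1 - 1/d_x) d_y - (2 |N(x,y)| + 1) + |N(S) ∩ N(x,y)|`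
where `S = N(x) \\ {y}` and `N(S) = {v : ∃ s ∈ S, vs ∈ E(G)}`. -/
theorem genbound_of_planar {V : Type*} [Fintype V]
    (G : SimpleGraph V) [DecidableRel G.Adj]
    (hplanar : Planar G)
    (hpos : ∀ u v : V, G.Adj u v → 0 < llyCurv G u v)
    (x y : V) (hxy : G.Adj x y) (hd : G.degree x ≤ G.degree y) :
    (({v : V | ∃ s ∈ G.neighborSet x \ {y}, G.Adj v s} ∩ G.neighborSet y).ncard : ℝ) >
      (1 - 1 / (G.degree x : ℝ)) * (G.degree y : ℝ)
        - (2 * ((G.neighborSet x ∩ G.neighborSet y).ncard : ℝ) + 1)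
        + (({v : V | ∃ s ∈ G.neighborSet x \ {y}, G.Adj v s}
            ∩ (G.neighborSet x ∩ G.neighborSet y)).ncard : ℝ) :=
  genbound_of_planar_general G hpos x y hxy
end

section
/- Let G be a finite simple maximal outerplanar graph and let xy be an edge of G with d_x ≤ d_y whose common neighborhood is N(x) ∩ N(y) = {w, z} with w ≠ z, such that |N(x) ∩ N(w) \ {y}| = 0, |N(x) ∩ N(z) \ {y}| = 0, |N(y) ∩ N(w) \ {x}| = 0, and |N(y) ∩ N(z) \ {x}| = 0. Then the Lin–Lu–Yau curvature satisfies κ(x,y) = 4/d_x + 6/d_y − 2. -/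
open SimpleGraph

/-!
A maximal outerplanar graph is connected: an edge added between two components is a bridge, and
a bridge never helps to build a minor of the 2-connected graphs `K₄` and `K_{2,3}`.

For an edge `xy` with `k` common neighbours and a 1-Lipschitz `f` with `f y - f x = 1`,
`Δf(x) - Δf(y)` equals `(2 + k)/d_x + (2 + 2k)/d_y - 2` plus three terms that are nonnegative
when `d_x ≤ d_y`: so this is a lower bound. It is attained by the McShane extension of the values
`0` at `x` and at the common neighbours, `1` at `y`, `-1` at the other neighbours of `x` and `2`
at the other neighbours of `y`. These values are 1-Lipschitz because the only triangles on `yw`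
and `yz` are `xyw` and `xyz`, so no common neighbour is adjacent to another neighbour of `y`, and
because the other neighbours of `x` and of `y` are at distance at least 3: a shorter path between
them, together with `x, y, w, z`, would be a `K_{2,3}` minor. Here `k = 2`.
-/

namespace SimpleGraph

variable {V W : Type*} {G : SimpleGraph V} {u v : V}

lemma Reachable.of_induce {S : Set V} {a b : S} (h : (G.induce S).Reachable a b) :
    G.Reachable a b :=
  h.map (Embedding.induce S).toHom

lemma reachable_of_connected_induce {S : Set V} (h : (G.induce S).Connected) {a b : V}
    (ha : a ∈ S) (hb : b ∈ S) : G.Reachable a b :=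
  (h.preconnected ⟨a, ha⟩ ⟨b, hb⟩).of_induce

lemma eq_of_mem_of_pairwise_disjoint {B : W → Set V}
    (hB : Pairwise fun p q => Disjoint (B p) (B q)) {p q : W} {t : V} (hp : t ∈ B p)
    (hq : t ∈ B q) : p = q :=
  by_contra fun h => Set.disjoint_left.1 (hB h) hp hq

lemma reachable_of_branchSets {H : SimpleGraph W} {B : W → Set V}
    (hB : ∀ p, (G.induce (B p)).Connected)
    (hE : ∀ p q, H.Adj p q → ∃ a ∈ B p, ∃ b ∈ B q, G.Adj a b)
    {p q : W} (h : H.Reachable p q) {a b : V} (ha : a ∈ B p) (hb : b ∈ B q) :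
    G.Reachable a b := by
  obtain ⟨w⟩ := h
  induction w generalizing a with
  | nil => exact reachable_of_connected_induce (hB _) ha hb
  | cons hpq _ ih =>
    obtain ⟨s, hs, t, ht, hst⟩ := hE _ _ hpq
    exact (reachable_of_connected_induce (hB _) ha hs).trans (hst.reachable.trans (ih ht hb))

lemma sup_edge_adj_cases {a b : V} (h : (G ⊔ edge u v).Adj a b) :
    G.Adj a b ∨ a = u ∧ b = v ∨ a = v ∧ b = u := by
  rw [sup_adj, edge_adj] at h
  tauto

lemma induce_sup_edge_eq {S : Set V} (h : ¬(u ∈ S ∧ v ∈ S)) :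
    (G ⊔ edge u v).induce S = G.induce S := by
  ext a b
  refine ⟨fun hab => ?_, Or.inl⟩
  rcases sup_edge_adj_cases hab with hab | ⟨ha, hb⟩ | ⟨ha, hb⟩
  · exact hab
  · exact absurd ⟨ha ▸ a.2, hb ▸ b.2⟩ h
  · exact absurd ⟨hb ▸ b.2, ha ▸ a.2⟩ h

lemma reachable_or_reachable_of_sup_edge {a : V} (h : (G ⊔ edge u v).Reachable u a) :
    G.Reachable u a ∨ G.Reachable v a := by
  rw [reachable_iff_reflTransGen] at h
  induction h with
  | refl => exact Or.inl .rfl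
  | tail _ hbc ih =>
    rcases sup_edge_adj_cases hbc with hbc | ⟨-, rfl⟩ | ⟨-, rfl⟩
    · exact ih.imp (·.trans hbc.reachable) (·.trans hbc.reachable)
    · exact Or.inr .rfl
    · exact Or.inl .rfl

lemma connected_induce_inter_of_sup_edge (huv : ¬ G.Reachable u v) {S : Set V}
    (hu : u ∈ S) (hS : ((G ⊔ edge u v).induce S).Connected) :
    (G.induce (S ∩ {t | G.Reachable u t})).Connected := by
  set T := S ∩ {t | G.Reachable u t}
  have huT : u ∈ T := ⟨hu, .rfl⟩
  have key : ∀ (a b : S), ((G ⊔ edge u v).induce S).Walk a b → b.1 = u →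
      ∀ ha : a.1 ∈ T, (G.induce T).Reachable ⟨a, ha⟩ ⟨u, huT⟩ := by
    intro a b w
    induction w with
    | nil => rintro rfl _; rfl
    | @cons a c _ hac _ ih =>
      intro hb ha
      rcases sup_edge_adj_cases hac with hac | ⟨ha', -⟩ | ⟨ha', -⟩
      · have hc : c.1 ∈ T := ⟨c.2, ha.2.trans hac.reachable⟩
        have hac' : (G.induce T).Adj ⟨a, ha⟩ ⟨c, hc⟩ := hac
        exact hac'.reachable.trans (ih hb hc)
      · subst ha'; rfl
      · exact absurd (ha' ▸ ha.2) huv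
  have : Nonempty T := ⟨⟨u, huT⟩⟩
  exact .mk fun ⟨a, ha⟩ ⟨b, hb⟩ =>
    (key ⟨a, ha.1⟩ ⟨u, hu⟩ (hS.preconnected _ _).some rfl ha).trans
      (key ⟨b, hb.1⟩ ⟨u, hu⟩ (hS.preconnected _ _).some rfl hb).symm

lemma connected_induce_inter_reachable_of_sup_edge (huv : ¬ G.Reachable u v) {S : Set V}
    (hu : u ∈ S) (hv : v ∈ S) (hS : ((G ⊔ edge u v).induce S).Connected) {a : V}
    (ha : a ∈ S) :
    (G.induce (S ∩ {t | G.Reachable a t})).Connected := by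
  rcases reachable_or_reachable_of_sup_edge (hS.preconnected ⟨u, hu⟩ ⟨a, ha⟩).of_induce
    with h | h
  · rw [show {t | G.Reachable a t} = {t | G.Reachable u t} from
      Set.ext fun t => ⟨h.trans, h.symm.trans⟩]
    exact connected_induce_inter_of_sup_edge huv hu hS
  · rw [show {t | G.Reachable a t} = {t | G.Reachable v t} from
      Set.ext fun t => ⟨h.trans, h.symm.trans⟩]
    rw [edge_comm] at hS
    exact connected_induce_inter_of_sup_edge (fun h => huv h.symm) hv hS

variable {H : SimpleGraph W} {B : W → Set V}

lemma isMinorOf_of_update_inter [DecidableEq W] (hdisj : Pairwise fun p q => Disjoint (B p) (B q))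
    (hE : ∀ p q, H.Adj p q → ∃ a ∈ B p, ∃ b ∈ B q, G.Adj a b) {r : W} {K : Set V}
    (hother : ∀ p ≠ r, (G.induce (B p)).Connected) (hr : (G.induce (B r ∩ K)).Connected)
    (hK : ∀ p, H.Adj r p → ∀ a ∈ B r, ∀ b ∈ B p, G.Adj a b → a ∈ K) :
    H.IsMinorOf G := by
  set B' := Function.update B r (B r ∩ K)
  have hB'r : B' r = B r ∩ K := Function.update_self ..
  have hB' : ∀ p ≠ r, B' p = B p := fun p hp => Function.update_of_ne hp ..
  refine ⟨B', fun p => ?_, fun p q hpq => ?_, fun p q hpq => ?_⟩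
  · rcases eq_or_ne p r with rfl | hp
    · exact hB'r ▸ hr
    · exact hB' p hp ▸ hother p hp
  · have hsub : ∀ p, B' p ⊆ B p := fun p => by
      rcases eq_or_ne p r with rfl | hp
      · exact hB'r ▸ Set.inter_subset_left
      · exact (hB' p hp).subset
    exact (hdisj hpq).mono (hsub p) (hsub q)
  · obtain ⟨a, ha, b, hb, hab⟩ := hE p q hpq
    rcases eq_or_ne p r with rfl | hp
    · rw [hB'r, hB' q hpq.ne']
      exact ⟨a, ⟨ha, hK q hpq a ha b hb hab⟩, b, hb, hab⟩
    rcases eq_or_ne q r with rfl | hq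
    · rw [hB'r, hB' p hp]
      exact ⟨a, ha, b, ⟨hb, hK p hpq.symm b hb a ha hab.symm⟩, hab⟩
    · rw [hB' p hp, hB' q hq]
      exact ⟨a, ha, b, hb, hab⟩

/-- The branch set of `r` containing the bridge is cut down to the side of the bridge facing the
other branch sets, which all lie on one side because `H - r` is connected. -/
lemma IsMinorOf.of_sup_edge_of_mem (huv : ¬ G.Reachable u v)
    (hH₂ : ∀ r, (H.induce {r}ᶜ).Preconnected) (hH₃ : ∀ r, ∃ p, H.Adj r p)
    (hB : ∀ p, ((G ⊔ edge u v).induce (B p)).Connected)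
    (hdisj : Pairwise fun p q => Disjoint (B p) (B q))
    (hadj : ∀ ⦃p q⦄, H.Adj p q → ∃ a ∈ B p, ∃ b ∈ B q, (G ⊔ edge u v).Adj a b)
    {r : W} (hu : u ∈ B r) (hv : v ∈ B r) : H.IsMinorOf G := by
  classical
  have hother : ∀ p ≠ r, (G.induce (B p)).Connected := fun p hp =>
    induce_sup_edge_eq (fun h => hp (eq_of_mem_of_pairwise_disjoint hdisj h.1 hu)) ▸ hB p
  have hE : ∀ p q, H.Adj p q → ∃ a ∈ B p, ∃ b ∈ B q, G.Adj a b := by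
    intro p q hpq
    obtain ⟨a, ha, b, hb, hab⟩ := hadj hpq
    rcases sup_edge_adj_cases hab with hab | ⟨rfl, rfl⟩ | ⟨rfl, rfl⟩
    · exact ⟨a, ha, b, hb, hab⟩
    · exact absurd ((eq_of_mem_of_pairwise_disjoint hdisj ha hu).trans
        (eq_of_mem_of_pairwise_disjoint hdisj hv hb)) hpq.ne
    · exact absurd ((eq_of_mem_of_pairwise_disjoint hdisj ha hv).trans
        (eq_of_mem_of_pairwise_disjoint hdisj hu hb)) hpq.ne
  obtain ⟨n, hn⟩ := hH₃ r
  obtain ⟨a₀, ha₀, b₀, hb₀, hab₀⟩ := hE r n hn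
  refine isMinorOf_of_update_inter hdisj hE hother
    (connected_induce_inter_reachable_of_sup_edge huv hu hv (hB r) ha₀)
    fun p hp a _ b hb hab => ?_
  have hb₀b : G.Reachable b₀ b :=
    reachable_of_branchSets (H := H.induce {r}ᶜ) (B := fun p => B p)
      (fun p => hother p p.2) (fun p q hpq => hE p q hpq)
      (hH₂ r ⟨n, hn.ne'⟩ ⟨p, hp.ne'⟩) hb₀ hb
  exact hab₀.reachable.trans (hb₀b.trans hab.symm.reachable)

/-- An edge `pq` of `H` realized only by the bridge would make `u` and `v` reachable in `G`,
along a cycle of `H` through `pq`. -/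
lemma IsMinorOf.of_sup_edge_of_not_mem (huv : ¬ G.Reachable u v)
    (hH₁ : ∀ p q, H.Adj p q → (H.deleteEdges {s(p, q)}).Reachable p q)
    (hB : ∀ p, ((G ⊔ edge u v).induce (B p)).Connected)
    (hdisj : Pairwise fun p q => Disjoint (B p) (B q))
    (hadj : ∀ ⦃p q⦄, H.Adj p q → ∃ a ∈ B p, ∃ b ∈ B q, (G ⊔ edge u v).Adj a b)
    (huvB : ∀ r, ¬(u ∈ B r ∧ v ∈ B r)) : H.IsMinorOf G := by
  have hB' : ∀ p, (G.induce (B p)).Connected := fun p => induce_sup_edge_eq (huvB p) ▸ hB p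
  have hbridge : ∀ p q, H.Adj p q → u ∈ B p → v ∈ B q → False := by
    intro p q hpq hu hv
    refine huv (reachable_of_branchSets hB' ?_ (hH₁ p q hpq) hu hv)
    intro p' q' h'
    rw [deleteEdges_adj, Set.mem_singleton_iff] at h'
    obtain ⟨a, ha, b, hb, hab⟩ := hadj h'.1
    rcases sup_edge_adj_cases hab with hab | ⟨rfl, rfl⟩ | ⟨rfl, rfl⟩
    · exact ⟨a, ha, b, hb, hab⟩
    · exact (h'.2 (by rw [eq_of_mem_of_pairwise_disjoint hdisj ha hu,
        eq_of_mem_of_pairwise_disjoint hdisj hb hv])).elim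
    · exact (h'.2 (by rw [eq_of_mem_of_pairwise_disjoint hdisj ha hv,
        eq_of_mem_of_pairwise_disjoint hdisj hb hu, Sym2.eq_swap])).elim
  refine ⟨B, hB', hdisj, fun p q hpq => ?_⟩
  obtain ⟨a, ha, b, hb, hab⟩ := hadj hpq
  rcases sup_edge_adj_cases hab with hab | ⟨rfl, rfl⟩ | ⟨rfl, rfl⟩
  · exact ⟨a, ha, b, hb, hab⟩
  · exact (hbridge p q hpq ha hb).elim
  · exact (hbridge q p hpq.symm hb ha).elim

theorem IsMinorOf.of_sup_edge (huv : ¬ G.Reachable u v)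
    (hH₁ : ∀ p q, H.Adj p q → (H.deleteEdges {s(p, q)}).Reachable p q)
    (hH₂ : ∀ r, (H.induce {r}ᶜ).Preconnected) (hH₃ : ∀ r, ∃ p, H.Adj r p)
    (h : H.IsMinorOf (G ⊔ edge u v)) : H.IsMinorOf G := by
  obtain ⟨B, hB, hdisj, hadj⟩ := h
  by_cases huvB : ∃ r, u ∈ B r ∧ v ∈ B r
  · obtain ⟨r, hu, hv⟩ := huvB
    exact of_sup_edge_of_mem huv hH₂ hH₃ hB hdisj hadj hu hv
  · exact of_sup_edge_of_not_mem huv hH₁ hB hdisj hadj (not_exists.1 huvB)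

instance {α β : Type*} : DecidableRel (completeBipartiteGraph α β).Adj := fun a b =>
  inferInstanceAs (Decidable (a.isLeft ∧ b.isRight ∨ a.isRight ∧ b.isLeft))

end SimpleGraph

theorem MaximalOuterplanar.preconnected {V : Type*} {G : SimpleGraph V}
    (h : MaximalOuterplanar G) : G.Preconnected := by
  intro u v
  by_contra huv
  have h' := h.2 u v (fun e => huv (e ▸ .rfl)) (fun hadj => huv hadj.reachable)
  rw [Outerplanar, not_and_or, not_not, not_not] at h'
  rcases h' with hK | hK
  · exact h.1.1 (hK.of_sup_edge huv (by decide) (by decide) (by decide))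
  · exact h.1.2 (hK.of_sup_edge huv (by decide) (by decide) (by decide))

namespace SimpleGraph

open Finset

variable {V : Type*} {G : SimpleGraph V}

lemma exists_lipschitz_extension (hG : G.Connected) (S : Finset V) (c : V → ℤ)
    (hc : ∀ s ∈ S, ∀ t ∈ S, c s - c t ≤ G.dist s t) :
    ∃ f : V → ℤ, (∀ u v, |f u - f v| ≤ G.dist u v) ∧ ∀ s ∈ S, f s = c s := by
  rcases S.eq_empty_or_nonempty with rfl | hS
  · exact ⟨0, by simp, by simp⟩
  set f : V → ℤ := fun v => S.sup' hS fun t => c t - G.dist v t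
  have hle : ∀ u v, f u ≤ f v + G.dist u v := fun u v => sup'_le _ _ fun t ht => by
    have h₁ : c t - (G.dist v t : ℤ) ≤ f v := le_sup' (fun t => c t - (G.dist v t : ℤ)) ht
    have h₂ : G.dist v t ≤ G.dist v u + G.dist u t := hG.dist_triangle
    have h₃ : G.dist v u = G.dist u v := dist_comm
    omega
  refine ⟨f, fun u v => abs_sub_le_iff.2 ⟨by linarith [hle u v], ?_⟩, fun s hs => ?_⟩
  · rw [dist_comm]; linarith [hle v u]
  · refine le_antisymm (sup'_le _ _ fun t ht => ?_) ?_
    · rw [dist_comm]; linarith [hc t ht s hs]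
    · simpa using le_sup' (fun t => c t - (G.dist s t : ℤ)) hs

lemma Connected.three_le_dist (hG : G.Connected) {a b : V} (hne : a ≠ b) (hadj : ¬ G.Adj a b)
    (hc : ∀ c, G.Adj a c → ¬ G.Adj c b) : 3 ≤ G.dist a b := by
  have h := two_lt_edist_iff.2 ⟨hne, hadj, Set.eq_empty_of_forall_notMem fun c hc' =>
    hc c (G.mem_commonNeighbors.1 hc').1 (G.mem_commonNeighbors.1 hc').2.symm⟩
  rw [← (hG a b).coe_dist_eq_edist] at h
  exact_mod_cast h

lemma abs_sub_le_one_of_adj {f : V → ℤ} {u v : V} (hf : |f u - f v| ≤ G.dist u v)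
    (h : G.Adj u v) : |(f u : ℝ) - f v| ≤ 1 := by
  rw [dist_eq_one_iff_adj.2 h] at hf
  exact_mod_cast hf

variable (G) in
def IsPrivateNeighbor (x y v : V) : Prop :=
  G.Adj x v ∧ v ≠ y ∧ ¬ G.Adj y v

lemma completeBipartiteGraph_isMinorOf {α β : Type*} {p : α → V} (hp : p.Injective)
    {Q : β → Set V} (hQ : ∀ j, (G.induce (Q j)).Connected)
    (hQdisj : Pairwise fun i j => Disjoint (Q i) (Q j)) (hpQ : ∀ i j, p i ∉ Q j)
    (hadj : ∀ i j, ∃ q ∈ Q j, G.Adj (p i) q) :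
    (completeBipartiteGraph α β).IsMinorOf G := by
  refine ⟨Sum.elim (fun i => {p i}) Q, ?_, ?_, ?_⟩
  · rintro (i | j)
    · simp
    · exact hQ j
  · rintro (i | j) (i' | j') h
    · simpa [hp.eq_iff] using h
    · simpa using hpQ i j'
    · simpa using hpQ i' j
    · exact hQdisj fun e => h (congrArg Sum.inr e)
  · rintro (i | j) (i' | j') h
    · simp at h
    · simpa using hadj i j'
    · obtain ⟨q, hq, h⟩ := hadj i' j
      exact ⟨q, hq, p i', rfl, h.symm⟩
    · simp at h

lemma completeBipartiteGraph_isMinorOf_of_walk {x y w z a b : V} (hxy : x ≠ y) (hwz : w ≠ z)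
    (hw : G.Adj x w ∧ G.Adj y w) (hz : G.Adj x z ∧ G.Adj y z) (ha : G.Adj x a) (hb : G.Adj y b)
    (p : G.Walk a b) (hp : ∀ t ∈ p.support, t ≠ x ∧ t ≠ y ∧ t ≠ w ∧ t ≠ z) :
    (completeBipartiteGraph (Fin 2) (Fin 3)).IsMinorOf G := by
  have hxp : x ∉ p.support := fun h => (hp x h).1 rfl
  have hyp : y ∉ p.support := fun h => (hp y h).2.1 rfl
  have hwp : w ∉ p.support := fun h => (hp w h).2.2.1 rfl
  have hzp : z ∉ p.support := fun h => (hp z h).2.2.2 rfl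
  refine completeBipartiteGraph_isMinorOf (p := ![x, y])
    (Q := ![{w}, {z}, {t | t ∈ p.support}]) ?_ ?_ ?_ ?_ ?_
  · intro i j h
    fin_cases i <;> fin_cases j <;> simp_all
  · intro j
    fin_cases j
    · simp
    · simp
    · exact p.connected_induce_support
  · intro i j h
    fin_cases i <;> fin_cases j <;> simp_all [Set.disjoint_left, eq_comm]
  · intro i j
    fin_cases i <;> fin_cases j
    · simpa using hw.1.ne
    · simpa using hz.1.ne
    · exact hxp
    · simpa using hw.2.ne
    · simpa using hz.2.ne
    · exact hyp
  · intro i j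
    fin_cases i <;> fin_cases j
    · exact ⟨w, rfl, hw.1⟩
    · exact ⟨z, rfl, hz.1⟩
    · exact ⟨a, p.start_mem_support, ha⟩
    · exact ⟨w, rfl, hw.2⟩
    · exact ⟨z, rfl, hz.2⟩
    · exact ⟨b, p.end_mem_support, hb⟩

lemma three_le_dist_of_isPrivateNeighbor
    (hK : ¬ (completeBipartiteGraph (Fin 2) (Fin 3)).IsMinorOf G) (hG : G.Connected)
    {x y w z a b : V} (hxy : G.Adj x y) (hwz : w ≠ z) (hcom : G.commonNeighbors x y = {w, z})
    (hyw : G.commonNeighbors y w ⊆ {x}) (hyz : G.commonNeighbors y z ⊆ {x})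
    (ha : G.IsPrivateNeighbor x y a) (hb : G.IsPrivateNeighbor y x b) : 3 ≤ G.dist a b := by
  have hw : G.Adj x w ∧ G.Adj y w := G.mem_commonNeighbors.1 (by simp [hcom])
  have hz : G.Adj x z ∧ G.Adj y z := G.mem_commonNeighbors.1 (by simp [hcom])
  have hpath := completeBipartiteGraph_isMinorOf_of_walk hxy.ne hwz hw hz ha.1 hb.1
  have hav : a ≠ x ∧ a ≠ y ∧ a ≠ w ∧ a ≠ z :=
    ⟨ha.1.ne', ha.2.1, fun h => ha.2.2 (h ▸ hw.2), fun h => ha.2.2 (h ▸ hz.2)⟩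
  have hbv : b ≠ x ∧ b ≠ y ∧ b ≠ w ∧ b ≠ z :=
    ⟨hb.2.1, hb.1.ne', fun h => hb.2.2 (h ▸ hw.1), fun h => hb.2.2 (h ▸ hz.1)⟩
  refine hG.three_le_dist (fun hab => hb.2.2 (hab ▸ ha.1))
    (fun hab => hK (hpath (.cons hab .nil) ?_))
    fun c hac hcb => hK (hpath (.cons hac (.cons hcb .nil)) ?_)
  · simp only [Walk.support_cons, Walk.support_nil, List.mem_cons, List.not_mem_nil, or_false]
    rintro t (rfl | rfl)
    exacts [hav, hbv]
  · have hcv : c ≠ x ∧ c ≠ y ∧ c ≠ w ∧ c ≠ z := by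
      refine ⟨?_, ?_, ?_, ?_⟩ <;> rintro rfl
      · exact hb.2.2 hcb
      · exact ha.2.2 hac.symm
      · exact hb.2.1 (hyw ⟨hb.1, hcb⟩)
      · exact hb.2.1 (hyz ⟨hb.1, hcb⟩)
    simp only [Walk.support_cons, Walk.support_nil, List.mem_cons, List.not_mem_nil, or_false]
    rintro t (rfl | rfl | rfl)
    exacts [hav, hcv, hbv]

variable [Fintype V] [DecidableRel G.Adj] [DecidableEq V] {x y : V} {f : V → ℤ}

lemma sum_neighborFinset_sub_left (hxy : G.Adj x y) (hf : f y - f x = 1) :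
    ∑ u ∈ G.neighborFinset x, ((f u : ℝ) - f x) =
      2 + #(G.neighborFinset x ∩ G.neighborFinset y)
        + ∑ u ∈ G.neighborFinset x ∩ G.neighborFinset y, ((f u : ℝ) - f x) - G.degree x
        + ∑ u ∈ G.neighborFinset x \ insert y (G.neighborFinset x ∩ G.neighborFinset y),
            ((f u : ℝ) - f x + 1) := by
  have hsub : insert y (G.neighborFinset x ∩ G.neighborFinset y) ⊆ G.neighborFinset x :=
    insert_subset (by simpa) inter_subset_left
  have htot : ∑ u ∈ G.neighborFinset x, ((f u : ℝ) - f x + 1) =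
      ∑ u ∈ G.neighborFinset x, ((f u : ℝ) - f x) + G.degree x := by
    simp [sum_add_distrib]
  have hins :
      ∑ u ∈ insert y (G.neighborFinset x ∩ G.neighborFinset y), ((f u : ℝ) - f x + 1) =
      (f y - f x + 1) + ∑ u ∈ G.neighborFinset x ∩ G.neighborFinset y, ((f u : ℝ) - f x)
        + #(G.neighborFinset x ∩ G.neighborFinset y) := by
    rw [sum_insert (by simp)]
    simp [sum_add_distrib, add_assoc]
  have hf' : (f y : ℝ) - f x = 1 := by exact_mod_cast hf
  linarith [sum_sdiff hsub (f := fun u => (f u : ℝ) - f x + 1)]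

lemma sum_neighborFinset_sub_right (hxy : G.Adj x y) (hf : f y - f x = 1) :
    ∑ u ∈ G.neighborFinset y, ((f u : ℝ) - f y) =
      G.degree y - 2 - 2 * #(G.neighborFinset x ∩ G.neighborFinset y)
        + ∑ u ∈ G.neighborFinset x ∩ G.neighborFinset y, ((f u : ℝ) - f x)
        - ∑ u ∈ G.neighborFinset y \ insert x (G.neighborFinset x ∩ G.neighborFinset y),
            ((f y : ℝ) + 1 - f u) := by
  have hsub : insert x (G.neighborFinset x ∩ G.neighborFinset y) ⊆ G.neighborFinset y :=
    insert_subset (by simpa using hxy.symm) inter_subset_right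
  have htot : ∑ u ∈ G.neighborFinset y, ((f y : ℝ) + 1 - f u) =
      G.degree y - ∑ u ∈ G.neighborFinset y, ((f u : ℝ) - f y) := by
    simp [sum_sub_distrib]
    ring
  have hins :
      ∑ u ∈ insert x (G.neighborFinset x ∩ G.neighborFinset y), ((f y : ℝ) + 1 - f u) =
      (f y + 1 - f x) + 2 * #(G.neighborFinset x ∩ G.neighborFinset y)
        - ∑ u ∈ G.neighborFinset x ∩ G.neighborFinset y, ((f u : ℝ) - f x) := by
    have hf' : (f y : ℝ) = f x + 1 := by
      rw [← sub_eq_iff_eq_add']; exact_mod_cast hf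
    rw [sum_insert (by simp)]
    simp [sum_sub_distrib, hf']
    ring
  have hf' : (f y : ℝ) - f x = 1 := by exact_mod_cast hf
  linarith [sum_sdiff hsub (f := fun u => (f y : ℝ) + 1 - f u)]

lemma graphLap_sub_graphLap_eq (hxy : G.Adj x y) (hfxy : f y - f x = 1) :
    graphLap G f x - graphLap G f y =
      (2 + #(G.neighborFinset x ∩ G.neighborFinset y)) / (G.degree x : ℝ)
        + (2 + 2 * #(G.neighborFinset x ∩ G.neighborFinset y)) / (G.degree y : ℝ) - 2
        + (∑ u ∈ G.neighborFinset x ∩ G.neighborFinset y, ((f u : ℝ) - f x))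
            * (1 / G.degree x - 1 / G.degree y)
        + (∑ u ∈ G.neighborFinset x \ insert y (G.neighborFinset x ∩ G.neighborFinset y),
            ((f u : ℝ) - f x + 1)) / G.degree x
        + (∑ u ∈ G.neighborFinset y \ insert x (G.neighborFinset x ∩ G.neighborFinset y),
            ((f y : ℝ) + 1 - f u)) / G.degree y := by
  have hdx : (G.degree x : ℝ) ≠ 0 := by exact_mod_cast hxy.degree_pos_left.ne'
  have hdy : (G.degree y : ℝ) ≠ 0 := by exact_mod_cast hxy.symm.degree_pos_left.ne'
  rw [graphLap, graphLap, sum_neighborFinset_sub_left hxy hfxy,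
    sum_neighborFinset_sub_right hxy hfxy]
  field_simp
  ring

theorem le_graphLap_sub_graphLap (hxy : G.Adj x y) (hd : G.degree x ≤ G.degree y)
    (hf : ∀ u v, |f u - f v| ≤ G.dist u v) (hfxy : f y - f x = 1) :
    (2 + #(G.neighborFinset x ∩ G.neighborFinset y)) / (G.degree x : ℝ)
        + (2 + 2 * #(G.neighborFinset x ∩ G.neighborFinset y)) / (G.degree y : ℝ) - 2
      ≤ graphLap G f x - graphLap G f y := by
  have h₁ := fun {u v : V} (h : G.Adj u v) => abs_le.1 (abs_sub_le_one_of_adj (hf u v) h)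
  have hfxy' : (f y : ℝ) - f x = 1 := by exact_mod_cast hfxy
  have hT : 0 ≤ ∑ u ∈ G.neighborFinset x ∩ G.neighborFinset y, ((f u : ℝ) - f x) :=
    sum_nonneg fun u hu => by
      linarith [(h₁ ((mem_neighborFinset ..).1 (mem_inter.1 hu).2)).2]
  have hX : 0 ≤
      ∑ u ∈ G.neighborFinset x \ insert y (G.neighborFinset x ∩ G.neighborFinset y),
      ((f u : ℝ) - f x + 1) :=
    sum_nonneg fun u hu => by
      linarith [(h₁ ((mem_neighborFinset ..).1 (mem_sdiff.1 hu).1)).2]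
  have hY : 0 ≤
      ∑ u ∈ G.neighborFinset y \ insert x (G.neighborFinset x ∩ G.neighborFinset y),
      ((f y : ℝ) + 1 - f u) :=
    sum_nonneg fun u hu => by
      linarith [(h₁ ((mem_neighborFinset ..).1 (mem_sdiff.1 hu).1)).1]
  have hdx : (0 : ℝ) < G.degree x := by exact_mod_cast hxy.degree_pos_left
  have hdxy : (G.degree x : ℝ) ≤ G.degree y := by exact_mod_cast hd
  have hinv : 0 ≤ 1 / (G.degree x : ℝ) - 1 / G.degree y :=
    sub_nonneg.2 (one_div_le_one_div_of_le hdx hdxy)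
  rw [graphLap_sub_graphLap_eq hxy hfxy]
  have := mul_nonneg hT hinv
  have := div_nonneg hX hdx.le
  have := div_nonneg hY (hdx.trans_le hdxy).le
  linarith

instance : DecidablePred (G.IsPrivateNeighbor x y) := fun v =>
  inferInstanceAs (Decidable (G.Adj x v ∧ v ≠ y ∧ ¬ G.Adj y v))

variable (G) in
def edgePotential (x y v : V) : ℤ :=
  if v = y then 1 else if G.IsPrivateNeighbor x y v then -1
  else if G.IsPrivateNeighbor y x v then 2 else 0

lemma edgePotential_sub_le_dist (hG : G.Connected)
    (hcomm : ∀ c ∈ G.commonNeighbors x y, ∀ b, G.IsPrivateNeighbor y x b → ¬ G.Adj c b)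
    (hfar : ∀ a b, G.IsPrivateNeighbor x y a → G.IsPrivateNeighbor y x b → 3 ≤ G.dist a b)
    {s t : V} (ht : t ∈ insert x (G.neighborFinset x ∪ G.neighborFinset y)) :
    G.edgePotential x y s - G.edgePotential x y t ≤ G.dist s t := by
  rcases eq_or_ne s t with rfl | hst
  · simp
  have h₁ := hG.pos_dist_of_ne hst
  have hyA : G.IsPrivateNeighbor x y t → 2 ≤ G.dist y t := fun ht =>
    hG.one_lt_dist_of_ne_of_not_adj ht.2.1.symm ht.2.2
  have hBS : G.IsPrivateNeighbor y x s → t ≠ y → ¬ G.IsPrivateNeighbor x y t →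
      ¬ G.IsPrivateNeighbor y x t → 2 ≤ G.dist s t := by
    intro hs hty hxt hyt
    refine hG.one_lt_dist_of_ne_of_not_adj hst fun hadj => ?_
    simp only [mem_insert, mem_union, mem_neighborFinset] at ht
    rcases ht with rfl | ht | ht
    · exact hs.2.2 hadj.symm
    · exact hcomm t ⟨ht, by_contra fun h => hxt ⟨ht, hty, h⟩⟩ s hs hadj.symm
    · have htx : t ≠ x := by rintro rfl; exact hs.2.2 hadj.symm
      exact hcomm t ⟨by_contra fun h => hyt ⟨ht, htx, h⟩, ht⟩ s hs hadj.symm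
  simp only [edgePotential]
  split_ifs <;> first
    | omega
    | (subst ‹s = y›; have := hyA ‹_›; omega)
    | (have := hfar t s ‹_› ‹_›; rw [dist_comm] at this; omega)
    | (have := hBS ‹_› ‹_› ‹_› ‹_›; omega)

theorem exists_graphLap_sub_graphLap_eq (hG : G.Connected) (hxy : G.Adj x y)
    (hcomm : ∀ c ∈ G.commonNeighbors x y, ∀ b, G.IsPrivateNeighbor y x b → ¬ G.Adj c b)
    (hfar : ∀ a b, G.IsPrivateNeighbor x y a → G.IsPrivateNeighbor y x b → 3 ≤ G.dist a b) :
    ∃ f : V → ℤ, (∀ u v, |f u - f v| ≤ G.dist u v) ∧ f y - f x = 1 ∧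
      graphLap G f x - graphLap G f y =
        (2 + #(G.neighborFinset x ∩ G.neighborFinset y)) / (G.degree x : ℝ)
          + (2 + 2 * #(G.neighborFinset x ∩ G.neighborFinset y)) / (G.degree y : ℝ) - 2 := by
  obtain ⟨f, hf, hfc⟩ := exists_lipschitz_extension hG _ (G.edgePotential x y)
    fun s _ t ht => edgePotential_sub_le_dist hG hcomm hfar ht
  have hfx : f x = 0 := by
    rw [hfc x (mem_insert_self ..)]
    simp [edgePotential, IsPrivateNeighbor, hxy.ne]
  have hfy : f y = 1 := by
    rw [hfc y (by simp [hxy])]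
    simp [edgePotential]
  have hfxy : f y - f x = 1 := by rw [hfx, hfy]; rfl
  refine ⟨f, hf, hfxy, ?_⟩
  rw [graphLap_sub_graphLap_eq hxy hfxy, sum_eq_zero, sum_eq_zero, sum_eq_zero]
  · simp
  · intro u hu
    simp only [mem_sdiff, mem_insert, mem_inter, mem_neighborFinset, not_or, not_and] at hu
    have hux : ¬ G.Adj x u := fun h => hu.2.2 h hu.1
    rw [hfc u (by simp [hu.1]), hfy]
    simp [edgePotential, IsPrivateNeighbor, hu.1, hux, hu.2.1, hu.1.ne']
    norm_num
  · intro u hu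
    simp only [mem_sdiff, mem_insert, mem_inter, mem_neighborFinset, not_or] at hu
    have huy : ¬ G.Adj y u := fun h => hu.2.2 ⟨hu.1, h⟩
    rw [hfc u (by simp [hu.1]), hfx]
    simp [edgePotential, IsPrivateNeighbor, hu.1, huy, hu.2.1]
  · intro u hu
    simp only [mem_inter, mem_neighborFinset] at hu
    rw [hfc u (by simp [hu.1]), hfx]
    simp [edgePotential, IsPrivateNeighbor, hu.1, hu.2, hu.2.ne']

theorem llyCurv_eq_of_isPrivateNeighbor (hG : G.Connected) (hxy : G.Adj x y)
    (hd : G.degree x ≤ G.degree y)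
    (hcomm : ∀ c ∈ G.commonNeighbors x y, ∀ b, G.IsPrivateNeighbor y x b → ¬ G.Adj c b)
    (hfar : ∀ a b, G.IsPrivateNeighbor x y a → G.IsPrivateNeighbor y x b → 3 ≤ G.dist a b) :
    llyCurv G x y =
      (2 + #(G.neighborFinset x ∩ G.neighborFinset y)) / (G.degree x : ℝ)
        + (2 + 2 * #(G.neighborFinset x ∩ G.neighborFinset y)) / (G.degree y : ℝ) - 2 := by
  obtain ⟨f, hf, hfxy, hval⟩ := exists_graphLap_sub_graphLap_eq hG hxy hcomm hfar
  refine IsLeast.csInf_eq ⟨⟨f, hf, hfxy, hval.symm⟩, ?_⟩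
  rintro r ⟨g, hg, hgxy, rfl⟩
  exact le_graphLap_sub_graphLap hxy hd hg hgxy

end SimpleGraph

theorem interior_config_9_general {V : Type*} [Fintype V]
    (G : SimpleGraph V) [DecidableRel G.Adj]
    (hmax : MaximalOuterplanar G)
    (x y w z : V) (hxy : G.Adj x y) (hd : G.degree x ≤ G.degree y)
    (hwz : w ≠ z)
    (hcom : G.neighborSet x ∩ G.neighborSet y = {w, z})
    (hyw : ((G.neighborSet y ∩ G.neighborSet w) \ {x}).ncard = 0)
    (hyz : ((G.neighborSet y ∩ G.neighborSet z) \ {x}).ncard = 0) :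
    llyCurv G x y = 4 / (G.degree x : ℝ) + 6 / (G.degree y : ℝ) - 2 := by
  classical
  have hG : G.Connected := G.connected_iff.2 ⟨hmax.preconnected, ⟨x⟩⟩
  have hyc : ∀ c ∈ G.commonNeighbors x y, G.commonNeighbors y c ⊆ {x} := by
    rw [commonNeighbors_eq, hcom]
    rintro c (rfl | rfl)
    exacts [Set.sdiff_eq_empty.1 ((Set.ncard_eq_zero).1 hyw),
      Set.sdiff_eq_empty.1 ((Set.ncard_eq_zero).1 hyz)]
  have hcomm : ∀ c ∈ G.commonNeighbors x y, ∀ b, G.IsPrivateNeighbor y x b → ¬ G.Adj c b :=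
    fun c hc b hb hcb => hb.2.1 (hyc c hc ⟨hb.1, hcb⟩)
  have hfar :
      ∀ a b, G.IsPrivateNeighbor x y a → G.IsPrivateNeighbor y x b → 3 ≤ G.dist a b :=
    fun a b => three_le_dist_of_isPrivateNeighbor hmax.1.2 hG hxy hwz hcom
      (hyc w (by simp [commonNeighbors_eq, hcom])) (hyc z (by simp [commonNeighbors_eq, hcom]))
  have hk : (G.neighborFinset x ∩ G.neighborFinset y).card = 2 := by
    rw [← Finset.card_pair hwz]
    congr 1
    ext u
    simpa using Set.ext_iff.1 hcom u
  rw [llyCurv_eq_of_isPrivateNeighbor hG hxy hd hcomm hfar, hk]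
  norm_num

/-- interior edge `xy` with common neighbors `w ≠ z`, where
`δ_xw = 0`, `δ_xz = 0`, `δ_yw = 0`, `δ_yz = 0`. -/
theorem interior_config_9 {V : Type*} [Fintype V]
    (G : SimpleGraph V) [DecidableRel G.Adj]
    (hmax : MaximalOuterplanar G)
    (x y w z : V) (hxy : G.Adj x y) (hd : G.degree x ≤ G.degree y)
    (hwz : w ≠ z)
    (hcom : G.neighborSet x ∩ G.neighborSet y = {w, z})
    (hxw : ((G.neighborSet x ∩ G.neighborSet w) \ {y}).ncard = 0)
    (hxz : ((G.neighborSet x ∩ G.neighborSet z) \ {y}).ncard = 0)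
    (hyw : ((G.neighborSet y ∩ G.neighborSet w) \ {x}).ncard = 0)
    (hyz : ((G.neighborSet y ∩ G.neighborSet z) \ {x}).ncard = 0) :
    llyCurv G x y = 4 / (G.degree x : ℝ) + 6 / (G.degree y : ℝ) - 2 :=
  interior_config_9_general G hmax x y w z hxy hd hwz hcom hyw hyz
end
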